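/- arXiv:1303.6012 — 10 statements merged into one kernel-verified Lean document; each statement's English description precedes it below -/
import Mathlib

section
/- Let H and H' be real inner product spaces, let G : H → H' be a linear map, and let φ₁, …, φ_r be an orthonormal family in H. Let S be the r × r real matrix with entries S_{ij} = ⟪G φ_j, G φ_i⟫. Then for every choice of coefficients a₁, …, a_r ∈ ℝ, the element v = Σ_{j=1}^r a_j φ_j satisfies ‖G v‖ ≤ √(‖S‖₂) · ‖v‖, where ‖S‖₂ denotes the operator norm of S acting on the Euclidean space ℝʳ. (POD inverse estimate, Lemma 3.1 of the paper: H plays the role of H¹₀(Ω) with the L² inner product, G the gradient, φ_j the L²-orthonormal POD basis, and S the POD stiffness matrix.) -/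
/-! The coefficient map `a ↦ ∑ aⱼ φⱼ` is an isometry from Euclidean `ℝʳ` into `H`, and
`S` is the Gram matrix of the `G φⱼ`, so `‖G v‖² = ⟪a, S a⟫ ≤ ‖S‖₂ ‖a‖² = ‖S‖₂ ‖v‖²`. -/

open scoped RealInnerProductSpace

open Matrix WithLp in
theorem Matrix.inner_toEuclideanCLM_gram {𝕜 E ι : Type*} [RCLike 𝕜] [SeminormedAddCommGroup E]
    [InnerProductSpace 𝕜 E] [Fintype ι] [DecidableEq ι] (v : ι → E) (x y : ι → 𝕜) :
    inner 𝕜 (toLp 2 x) (toEuclideanCLM (𝕜 := 𝕜) (gram 𝕜 v) (toLp 2 y)) =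
      inner 𝕜 (∑ i, x i • v i) (∑ i, y i • v i) := by
  rw [toEuclideanCLM_toLp, EuclideanSpace.inner_toLp_toLp, dotProduct_comm,
    star_dotProduct_gram_mulVec]

theorem Orthonormal.norm_sum_smul {𝕜 E ι : Type*} [RCLike 𝕜] [SeminormedAddCommGroup E]
    [InnerProductSpace 𝕜 E] [Fintype ι] {v : ι → E} (hv : Orthonormal 𝕜 v) (x : ι → 𝕜) :
    ‖∑ i, x i • v i‖ = ‖WithLp.toLp 2 x‖ := by
  refine (sq_eq_sq₀ (norm_nonneg _) (norm_nonneg _)).1 ?_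
  rw [EuclideanSpace.norm_sq_eq, ← RCLike.ofReal_inj (K := 𝕜), RCLike.ofReal_pow,
    ← inner_self_eq_norm_sq_to_K, hv.inner_sum]
  simp [RCLike.conj_mul]

theorem ContinuousLinearMap.real_inner_apply_self_le {E : Type*} [SeminormedAddCommGroup E]
    [InnerProductSpace ℝ E] (T : E →L[ℝ] E) (x : E) : ⟪x, T x⟫ ≤ ‖T‖ * ‖x‖ ^ 2 :=
  calc ⟪x, T x⟫ ≤ ‖x‖ * ‖T x‖ := real_inner_le_norm x (T x)
    _ ≤ ‖x‖ * (‖T‖ * ‖x‖) := mul_le_mul_of_nonneg_left (T.le_opNorm x) (norm_nonneg x)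
    _ = ‖T‖ * ‖x‖ ^ 2 := by ring

/-- POD inverse estimate (Lemma 3.1): for an orthonormal family `φ₁, …, φ_r` in `H`,
a linear map `G : H → H'`, and the stiffness matrix `S` with `S i j = ⟪G φ_j, G φ_i⟫`,
every `v = ∑ a_j • φ_j` satisfies `‖G v‖ ≤ √(‖S‖₂) * ‖v‖`. -/
theorem pod_inverse_estimate
    {H H' : Type*} [NormedAddCommGroup H] [InnerProductSpace ℝ H]
    [NormedAddCommGroup H'] [InnerProductSpace ℝ H']
    (r : ℕ) (G : H →ₗ[ℝ] H') (φ : Fin r → H) (hφ : Orthonormal ℝ φ)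
    (S : Matrix (Fin r) (Fin r) ℝ)
    (hS : ∀ i j, S i j = ⟪G (φ j), G (φ i)⟫)
    (a : Fin r → ℝ) :
    ‖G (∑ j, a j • φ j)‖ ≤
      Real.sqrt ‖Matrix.toEuclideanCLM (𝕜 := ℝ) S‖ * ‖∑ j, a j • φ j‖ := by
  have hS_gram : S = Matrix.gram ℝ (G ∘ φ) :=
    Matrix.ext fun i j => (hS i j).trans (real_inner_comm _ _)
  have hG_sq : ‖G (∑ j, a j • φ j)‖ ^ 2 =
      ⟪WithLp.toLp 2 a, Matrix.toEuclideanCLM (𝕜 := ℝ) S (WithLp.toLp 2 a)⟫ := by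
    rw [hS_gram, Matrix.inner_toEuclideanCLM_gram, ← real_inner_self_eq_norm_sq, map_sum]
    simp only [map_smul, Function.comp_apply]
  rw [hφ.norm_sum_smul, ← Real.sqrt_sq (norm_nonneg (WithLp.toLp 2 a)),
    ← Real.sqrt_mul (norm_nonneg _)]
  exact Real.le_sqrt_of_sq_le (hG_sq ▸ ContinuousLinearMap.real_inner_apply_self_le _ _)
end

section
/- Let H be a real inner product space and s₁, …, s_M ∈ H a family of snapshots. Let K be the M × M real symmetric positive semidefinite correlation matrix with entries K_{ij} = ⟪s_j, s_i⟫, let λ₁ ≥ λ₂ ≥ … ≥ λ_M ≥ 0 be its eigenvalues with a corresponding orthonormal family of eigenvectors v₁, …, v_M ∈ ℝᴹ, and let d be the number of positive eigenvalues (so λ_k > 0 exactly for k ≤ d). For 1 ≤ k ≤ d define the POD basis functions φ_k := (1/√λ_k) Σ_{j=1}^M (v_k)_j s_j. Then the family φ₁, …, φ_d is orthonormal in H: ⟪φ_k, φ_l⟫ = δ_{kl} for all 1 ≤ k, l ≤ d. -/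
/-!
The coefficient vectors of the `φ_k` are eigenvectors of the Gram matrix `K` of the snapshots, and
`⟪∑ᵢ xᵢ sᵢ, ∑ⱼ yⱼ sⱼ⟫ = x ⬝ᵥ K y`. Hence for eigenvectors `x = v_k`, `y = v_l` the inner product is
`λ_l (v_k ⬝ᵥ v_l) = λ_l δ_{kl}`, and the factors `1/√λ_k`, `1/√λ_l` normalize it to `δ_{kl}`.
-/

open scoped RealInnerProductSpace
open Matrix

lemma Matrix.gram_eq_of_apply_eq_inner_swap {E n : Type*} [NormedAddCommGroup E]
    [InnerProductSpace ℝ E] {s : n → E} {K : Matrix n n ℝ} (hK : ∀ i j, K i j = ⟪s j, s i⟫) :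
    K = gram ℝ s :=
  Matrix.ext fun i j => by rw [hK, gram_apply, real_inner_comm]

lemma inner_sum_smul_sum_smul_of_gram_mulVec_eq_smul {E n : Type*} [Fintype n]
    [NormedAddCommGroup E] [InnerProductSpace ℝ E] (s : n → E) (x : n → ℝ) {y : n → ℝ} {μ : ℝ}
    (hy : gram ℝ s *ᵥ y = μ • y) :
    ⟪∑ i, x i • s i, ∑ i, y i • s i⟫ = μ * (x ⬝ᵥ y) := by
  rw [← star_dotProduct_gram_mulVec, star_trivial, hy, dotProduct_smul, smul_eq_mul]

theorem pod_basis_orthonormal_general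
    {H : Type*} [NormedAddCommGroup H] [InnerProductSpace ℝ H]
    (M : ℕ) (s : Fin M → H)
    (K : Matrix (Fin M) (Fin M) ℝ)
    (hK : ∀ i j, K i j = ⟪s j, s i⟫)
    (lam : Fin M → ℝ) (v : Fin M → Fin M → ℝ)
    (heig : ∀ k, K.mulVec (v k) = lam k • v k)
    (hortho : ∀ k l, (∑ j, v k j * v l j) = if k = l then (1:ℝ) else 0)
    (d : ℕ)
    (hd : ∀ k : Fin M, 0 < lam k ↔ (k : ℕ) < d)
    (φ : Fin M → H)
    (hφ : ∀ k : Fin M, (k : ℕ) < d →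
      φ k = (1 / Real.sqrt (lam k)) • ∑ j, v k j • s j) :
    ∀ k l : Fin M, (k : ℕ) < d → (l : ℕ) < d →
      ⟪φ k, φ l⟫ = if k = l then (1:ℝ) else 0 := by
  intro k l hk hl
  have hgram : gram ℝ s *ᵥ v l = lam l • v l := by
    rw [← gram_eq_of_apply_eq_inner_swap hK, heig]
  have hcomb : ⟪∑ j, v k j • s j, ∑ j, v l j • s j⟫ = lam l * if k = l then 1 else 0 := by
    rw [inner_sum_smul_sum_smul_of_gram_mulVec_eq_smul s (v k) hgram, dotProduct, hortho]
  rw [hφ k hk, hφ l hl, real_inner_smul_left, real_inner_smul_right, hcomb]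
  split_ifs with hkl
  · subst hkl
    have hpos : 0 < lam k := (hd k).2 hk
    field_simp
    exact (Real.sq_sqrt hpos.le).symm
  · simp

/-- The POD basis functions `φ_k = (1/√λ_k) ∑_j (v_k)_j s_j` built from the eigenpairs of the
snapshot correlation matrix `K_{ij} = ⟪s_j, s_i⟫` form an orthonormal family. -/
theorem pod_basis_orthonormal
    {H : Type*} [NormedAddCommGroup H] [InnerProductSpace ℝ H]
    (M : ℕ) (s : Fin M → H)
    (K : Matrix (Fin M) (Fin M) ℝ)
    (hK : ∀ i j, K i j = ⟪s j, s i⟫)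
    (lam : Fin M → ℝ) (v : Fin M → Fin M → ℝ)
    (hlam_sorted : ∀ k l : Fin M, k ≤ l → lam l ≤ lam k)
    (hlam_nonneg : ∀ k, 0 ≤ lam k)
    (heig : ∀ k, K.mulVec (v k) = lam k • v k)
    (hortho : ∀ k l, (∑ j, v k j * v l j) = if k = l then (1:ℝ) else 0)
    (d : ℕ)
    (hd : ∀ k : Fin M, 0 < lam k ↔ (k : ℕ) < d)
    (φ : Fin M → H)
    (hφ : ∀ k : Fin M, (k : ℕ) < d →
      φ k = (1 / Real.sqrt (lam k)) • ∑ j, v k j • s j) :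
    ∀ k l : Fin M, (k : ℕ) < d → (l : ℕ) < d →
      ⟪φ k, φ l⟫ = if k = l then (1:ℝ) else 0 :=
  pod_basis_orthonormal_general M s K hK lam v heig hortho d hd φ hφ
end

section
/- Let H be a real inner product space and s₁, …, s_M ∈ H a family of snapshots. Let K be the M × M real symmetric positive semidefinite correlation matrix with entries K_{ij} = ⟪s_j, s_i⟫, let λ₁ ≥ λ₂ ≥ … ≥ λ_M ≥ 0 be its eigenvalues with a corresponding orthonormal family of eigenvectors v₁, …, v_M ∈ ℝᴹ, and let d be the number of positive eigenvalues. For 1 ≤ k ≤ d define φ_k := (1/√λ_k) Σ_{j=1}^M (v_k)_j s_j. Then for every 0 ≤ r ≤ d the POD approximation property holds: Σ_{i=1}^M ‖ s_i − Σ_{j=1}^r ⟪s_i, φ_j⟫ φ_j ‖² = Σ_{j=r+1}^d λ_j. (This is the approximation property (2.8)–(2.9) of the paper: the total squared projection error of the snapshots onto the span of the first r POD modes equals the sum of the discarded eigenvalues.) -/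
/-!
The Gram matrix `K` has trace `∑ ‖sᵢ‖²`, and since its eigenvectors are the rows of an orthogonal
matrix this trace is also `∑ λₖ`. Writing `wₖ = ∑ⱼ (vₖ)ⱼ sⱼ`, one has `⟪sᵢ, wₖ⟫ = (K vₖ)ᵢ = λₖ (vₖ)ᵢ`,
so the modes `φₖ = wₖ / √λₖ` are orthonormal with `⟪sᵢ, φₖ⟫ = √λₖ (vₖ)ᵢ`. Pythagoras gives the
error of the snapshot `sᵢ` as `‖sᵢ‖² - ∑_{j<r} λⱼ (vⱼ)ᵢ²`, and summing over `i` leaves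
`∑ₖ λₖ - ∑_{j<r} λⱼ`, in which only the eigenvalues `λⱼ`, `r ≤ j < d`, are nonzero.
-/

open scoped RealInnerProductSpace

namespace Matrix

variable {n R : Type*} [Fintype n] [DecidableEq n] [CommRing R]

theorem mul_transpose_eq_transpose_mul_diagonal {K V : Matrix n n R} {lam : n → R}
    (heig : ∀ k, K *ᵥ V k = lam k • V k) : K * Vᵀ = Vᵀ * diagonal lam := by
  ext i k
  rw [mul_diagonal, transpose_apply]
  simpa [mul_apply, mulVec, dotProduct, mul_comm] using congrFun (heig k) i

theorem trace_eq_sum_of_orthonormal_eigenvectors {K V : Matrix n n R} (hV : V * Vᵀ = 1)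
    {lam : n → R} (heig : ∀ k, K *ᵥ V k = lam k • V k) : K.trace = ∑ k, lam k := by
  have hVtV : Vᵀ * V = 1 := mul_eq_one_comm.mp hV
  calc K.trace = (K * Vᵀ * V).trace := by rw [Matrix.mul_assoc, hVtV, Matrix.mul_one]
    _ = (Vᵀ * diagonal lam * V).trace := by rw [mul_transpose_eq_transpose_mul_diagonal heig]
    _ = (diagonal lam * (V * Vᵀ)).trace := by
      rw [Matrix.mul_assoc, trace_mul_comm, Matrix.mul_assoc]
    _ = ∑ k, lam k := by rw [hV, Matrix.mul_one, trace_diagonal]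

end Matrix

theorem norm_sub_sum_inner_smul_sq {E ι : Type*} [NormedAddCommGroup E] [InnerProductSpace ℝ E]
    [DecidableEq ι] {s : Finset ι} {e : ι → E}
    (he : ∀ i ∈ s, ∀ j ∈ s, ⟪e i, e j⟫ = if i = j then 1 else 0) (x : E) :
    ‖x - ∑ i ∈ s, ⟪x, e i⟫ • e i‖ ^ 2 = ‖x‖ ^ 2 - ∑ i ∈ s, ⟪x, e i⟫ ^ 2 := by
  have hproj : ⟪x, ∑ i ∈ s, ⟪x, e i⟫ • e i⟫ = ∑ i ∈ s, ⟪x, e i⟫ ^ 2 := by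
    simp [inner_sum, inner_smul_right, sq]
  have hnorm : ‖∑ i ∈ s, ⟪x, e i⟫ • e i‖ ^ 2 = ∑ i ∈ s, ⟪x, e i⟫ ^ 2 := by
    rw [← real_inner_self_eq_norm_sq, sum_inner]
    refine Finset.sum_congr rfl fun i hi => ?_
    simp +contextual only [inner_sum, real_inner_smul_left, inner_smul_right, he i hi, mul_ite,
      mul_one, mul_zero, Finset.sum_ite_eq, hi, if_true, sq]
  rw [norm_sub_sq_real, hproj, hnorm]
  ring

theorem Fin.sum_sub_sum_filter_lt {M d r : ℕ} {f : Fin M → ℝ}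
    (hf : ∀ k : Fin M, d ≤ k → f k = 0) :
    ∑ k, f k - ∑ k ∈ Finset.univ.filter (fun k : Fin M => (k : ℕ) < r), f k
      = ∑ k ∈ Finset.univ.filter (fun k : Fin M => r ≤ (k : ℕ) ∧ (k : ℕ) < d), f k := by
  rw [← Finset.sum_filter_add_sum_filter_not Finset.univ (fun k : Fin M => (k : ℕ) < r) f,
    add_sub_cancel_left]
  refine (Finset.sum_subset (fun k => ?_) fun k hk hk' => ?_).symm
  · simp only [Finset.mem_filter, Finset.mem_univ, true_and]
    omega
  · simp only [Finset.mem_filter, Finset.mem_univ, true_and] at hk hk'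
    exact hf k (by omega)

section POD

variable {H ι : Type*} [NormedAddCommGroup H] [InnerProductSpace ℝ H] [Fintype ι]

noncomputable def podMode (s : ι → H) (lam : ι → ℝ) (v : ι → ι → ℝ) (k : ι) : H :=
  (1 / Real.sqrt (lam k)) • ∑ j, v k j • s j

variable {s : ι → H} {K : Matrix ι ι ℝ} {lam : ι → ℝ} {v : ι → ι → ℝ}

theorem sum_norm_sq_eq_trace_of_gram (hK : ∀ i j, K i j = ⟪s j, s i⟫) :
    ∑ i, ‖s i‖ ^ 2 = K.trace := by
  simp [Matrix.trace, hK]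

theorem inner_sum_smul_eq_mulVec_of_gram (hK : ∀ i j, K i j = ⟪s j, s i⟫) (c : ι → ℝ) (i : ι) :
    ⟪s i, ∑ j, c j • s j⟫ = K.mulVec c i := by
  simp [inner_sum, inner_smul_right, Matrix.mulVec, dotProduct, hK, real_inner_comm, mul_comm]

theorem inner_podMode (hK : ∀ i j, K i j = ⟪s j, s i⟫) {k : ι}
    (heig : K.mulVec (v k) = lam k • v k) (i : ι) :
    ⟪s i, podMode s lam v k⟫ = Real.sqrt (lam k) * v k i := by
  rw [podMode, inner_smul_right, inner_sum_smul_eq_mulVec_of_gram hK, heig, Pi.smul_apply,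
    smul_eq_mul, ← mul_assoc, one_div_mul_eq_div, Real.div_sqrt]

theorem sum_inner_podMode_sq (hK : ∀ i j, K i j = ⟪s j, s i⟫) {k : ι}
    (heig : K.mulVec (v k) = lam k • v k) (hunit : ∑ j, v k j * v k j = 1) (hk : 0 ≤ lam k) :
    ∑ i, ⟪s i, podMode s lam v k⟫ ^ 2 = lam k := by
  simp only [inner_podMode hK heig, mul_pow, Real.sq_sqrt hk, sq (v k _), ← Finset.mul_sum, hunit,
    mul_one]

theorem inner_podMode_podMode [DecidableEq ι] (hK : ∀ i j, K i j = ⟪s j, s i⟫)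
    (heig : ∀ k, K.mulVec (v k) = lam k • v k)
    (hortho : ∀ k l, (∑ j, v k j * v l j) = if k = l then (1:ℝ) else 0)
    {k : ι} (hk : 0 < lam k) (l : ι) :
    ⟪podMode s lam v k, podMode s lam v l⟫ = if k = l then 1 else 0 := by
  have hexpand : ⟪podMode s lam v k, podMode s lam v l⟫
      = Real.sqrt (lam l) / Real.sqrt (lam k) * ∑ j, v k j * v l j := by
    rw [podMode, real_inner_smul_left, sum_inner]
    simp only [real_inner_smul_left, inner_podMode hK (heig l), Finset.mul_sum]
    exact Finset.sum_congr rfl fun j _ => by ring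
  rw [hexpand, hortho]
  split_ifs with hkl
  · subst hkl
    simp [(Real.sqrt_pos.mpr hk).ne']
  · simp

end POD

theorem pod_approximation_property_general
    {H : Type*} [NormedAddCommGroup H] [InnerProductSpace ℝ H]
    (M : ℕ) (s : Fin M → H)
    (K : Matrix (Fin M) (Fin M) ℝ)
    (hK : ∀ i j, K i j = ⟪s j, s i⟫)
    (lam : Fin M → ℝ) (v : Fin M → Fin M → ℝ)
    (hlam_nonneg : ∀ k, 0 ≤ lam k)
    (heig : ∀ k, K.mulVec (v k) = lam k • v k)
    (hortho : ∀ k l, (∑ j, v k j * v l j) = if k = l then (1:ℝ) else 0)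
    (d : ℕ)
    (hd : ∀ k : Fin M, 0 < lam k ↔ (k : ℕ) < d)
    (φ : Fin M → H)
    (hφ : ∀ k : Fin M, (k : ℕ) < d →
      φ k = (1 / Real.sqrt (lam k)) • ∑ j, v k j • s j) :
    ∀ r : ℕ, r ≤ d →
      ∑ i, ‖s i - ∑ j ∈ Finset.univ.filter (fun j : Fin M => (j : ℕ) < r),
              ⟪s i, φ j⟫ • φ j‖ ^ 2
        = ∑ j ∈ Finset.univ.filter (fun j : Fin M => r ≤ (j : ℕ) ∧ (j : ℕ) < d),
              lam j := by
  intro r hr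
  set F := Finset.univ.filter (fun j : Fin M => (j : ℕ) < r)
  have hFd : ∀ j ∈ F, (j : ℕ) < d := fun j hj => by
    simp only [F, Finset.mem_filter] at hj
    omega
  have hφF : ∀ j ∈ F, φ j = podMode s lam v j := fun j hj => hφ j (hFd j hj)
  have horth : ∀ k ∈ F, ∀ l ∈ F, ⟪φ k, φ l⟫ = if k = l then 1 else 0 := fun k hk l hl => by
    rw [hφF k hk, hφF l hl]
    exact inner_podMode_podMode hK heig hortho ((hd k).2 (hFd k hk)) l
  have hsq : ∀ j ∈ F, ∑ i, ⟪s i, φ j⟫ ^ 2 = lam j := fun j hj => by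
    rw [hφF j hj]
    exact sum_inner_podMode_sq hK (heig j) (by simpa using hortho j j) (hlam_nonneg j)
  have hV : Matrix.of v * (Matrix.of v).transpose = 1 := by
    ext k l
    simpa [Matrix.mul_apply, Matrix.one_apply] using hortho k l
  calc ∑ i, ‖s i - ∑ j ∈ F, ⟪s i, φ j⟫ • φ j‖ ^ 2
      = ∑ i, (‖s i‖ ^ 2 - ∑ j ∈ F, ⟪s i, φ j⟫ ^ 2) :=
        Finset.sum_congr rfl fun i _ => norm_sub_sum_inner_smul_sq horth (s i)
    _ = ∑ k, lam k - ∑ j ∈ F, lam j := by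
      rw [Finset.sum_sub_distrib, sum_norm_sq_eq_trace_of_gram hK,
        Matrix.trace_eq_sum_of_orthonormal_eigenvectors hV heig, Finset.sum_comm,
        Finset.sum_congr rfl hsq]
    _ = _ := Fin.sum_sub_sum_filter_lt fun k hk =>
      le_antisymm (not_lt.mp fun hpos => ((hd k).mp hpos).not_ge hk) (hlam_nonneg k)

/-- POD approximation property (2.8)–(2.9): for every `0 ≤ r ≤ d`, the total squared
projection error of the snapshots onto the span of the first `r` POD modes equals the sum
of the discarded eigenvalues: `∑_i ‖s_i − ∑_{j≤r} ⟪s_i, φ_j⟫ φ_j‖² = ∑_{j=r+1}^d λ_j`. -/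
theorem pod_approximation_property
    {H : Type*} [NormedAddCommGroup H] [InnerProductSpace ℝ H]
    (M : ℕ) (s : Fin M → H)
    (K : Matrix (Fin M) (Fin M) ℝ)
    (hK : ∀ i j, K i j = ⟪s j, s i⟫)
    (lam : Fin M → ℝ) (v : Fin M → Fin M → ℝ)
    (hlam_sorted : ∀ k l : Fin M, k ≤ l → lam l ≤ lam k)
    (hlam_nonneg : ∀ k, 0 ≤ lam k)
    (heig : ∀ k, K.mulVec (v k) = lam k • v k)
    (hortho : ∀ k l, (∑ j, v k j * v l j) = if k = l then (1:ℝ) else 0)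
    (d : ℕ)
    (hd : ∀ k : Fin M, 0 < lam k ↔ (k : ℕ) < d)
    (φ : Fin M → H)
    (hφ : ∀ k : Fin M, (k : ℕ) < d →
      φ k = (1 / Real.sqrt (lam k)) • ∑ j, v k j • s j) :
    ∀ r : ℕ, r ≤ d →
      ∑ i, ‖s i - ∑ j ∈ Finset.univ.filter (fun j : Fin M => (j : ℕ) < r),
              ⟪s i, φ j⟫ • φ j‖ ^ 2
        = ∑ j ∈ Finset.univ.filter (fun j : Fin M => r ≤ (j : ℕ) ∧ (j : ℕ) < d),
              lam j :=
  pod_approximation_property_general M s K hK lam v hlam_nonneg heig hortho d hd φ hφ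
end

section
/- Let H be a real inner product space and s₁, …, s_M ∈ H a family of snapshots. Let K be the M × M real symmetric positive semidefinite correlation matrix with entries K_{ij} = ⟪s_j, s_i⟫, let λ₁ ≥ λ₂ ≥ … ≥ λ_M ≥ 0 be its eigenvalues, and let d be the number of positive eigenvalues. Then for every 0 ≤ r ≤ d and every orthonormal family ψ₁, …, ψ_r in H, Σ_{i=1}^M ‖ s_i − Σ_{j=1}^r ⟪s_i, ψ_j⟫ ψ_j ‖² ≥ Σ_{j=r+1}^d λ_j. (Hence, combined with the POD approximation property, the POD basis solves the minimization problem (2.4) of the paper: among all orthonormal families of size r it minimizes the total squared projection error of the snapshots.) -/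
/-!
Mixing the snapshots with the orthogonal eigenvector matrix gives the POD modes
`w k = ∑ i, v k i • s i`, which are pairwise orthogonal with `‖w k‖ ^ 2 = λ k`. Orthogonal mixing
preserves both `∑ i, ‖s i‖ ^ 2` and `∑ i, ⟪s i, x⟫ ^ 2`, so the projection error equals
`∑ k, λ k - ∑ k, λ k * t k` with weights `t k = ∑ j, ⟪w k, ψ j⟫ ^ 2 / λ k`. Bessel's inequality,
once for the `ψ j` and once for the normalized `w k`, gives `0 ≤ t k ≤ 1` and `∑ k, t k ≤ r`, and for
decreasing `λ` such weights satisfy `∑ k, λ k * t k ≤ ∑ k < r, λ k` (Ky Fan's maximum principle).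
-/

open Finset
open scoped Matrix RealInnerProductSpace

section InnerProduct

variable {E : Type*} [NormedAddCommGroup E] [InnerProductSpace ℝ E] {ι : Type*} [Fintype ι]

theorem Orthonormal.norm_sub_sum_inner_smul_sq {ψ : ι → E} (hψ : Orthonormal ℝ ψ) (x : E) :
    ‖x - ∑ j, ⟪x, ψ j⟫ • ψ j‖ ^ 2 = ‖x‖ ^ 2 - ∑ j, ⟪x, ψ j⟫ ^ 2 := by
  have hx : ⟪x, ∑ j, ⟪x, ψ j⟫ • ψ j⟫ = ∑ j, ⟪x, ψ j⟫ ^ 2 := by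
    simp only [inner_sum, real_inner_smul_right, sq]
  have hp : ‖∑ j, ⟪x, ψ j⟫ • ψ j‖ ^ 2 = ∑ j, ⟪x, ψ j⟫ ^ 2 := by
    rw [← real_inner_self_eq_norm_sq, hψ.inner_sum]
    simp [sq]
  rw [norm_sub_sq_real, hx, hp]
  ring

theorem sum_inner_sq_div_norm_sq_le {w : ι → E} (hw : Pairwise fun k l => ⟪w k, w l⟫ = 0)
    (x : E) : ∑ k, ⟪w k, x⟫ ^ 2 / ‖w k‖ ^ 2 ≤ ‖x‖ ^ 2 := by
  set c : ι → ℝ := fun k => ⟪w k, x⟫ / ‖w k‖ ^ 2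
  set p : E := ∑ k, c k • w k
  have hxp : ⟪x, p⟫ = ∑ k, ⟪w k, x⟫ ^ 2 / ‖w k‖ ^ 2 := by
    simp only [p, c, inner_sum, real_inner_smul_right, real_inner_comm x]
    exact sum_congr rfl fun k _ => by ring
  have hpp : ‖p‖ ^ 2 = ∑ k, ⟪w k, x⟫ ^ 2 / ‖w k‖ ^ 2 := by
    rw [← real_inner_self_eq_norm_sq]
    simp only [p, sum_inner, inner_sum, real_inner_smul_left, real_inner_smul_right]
    refine sum_congr rfl fun k _ => ?_
    rw [sum_eq_single k (fun l _ hlk => by rw [hw hlk, mul_zero, mul_zero]) (by simp),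
      real_inner_self_eq_norm_sq]
    rcases eq_or_ne (w k) 0 with hk | hk
    · simp [c, hk]
    · have hk' : ‖w k‖ ≠ 0 := norm_ne_zero_iff.mpr hk
      simp only [c]
      field_simp
  nlinarith [norm_sub_sq_real x p, sq_nonneg ‖x - p‖]

theorem sum_norm_sq_sum_smul_of_orthogonal [DecidableEq ι] {V : Matrix ι ι ℝ} (hV : Vᵀ * V = 1)
    (s : ι → E) : ∑ k, ‖∑ i, V k i • s i‖ ^ 2 = ∑ i, ‖s i‖ ^ 2 := by
  have hcol : ∀ i l, ∑ k, V k i * V k l = if i = l then 1 else 0 := fun i l => by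
    simpa [Matrix.mul_apply, Matrix.one_apply] using congr_fun (congr_fun hV i) l
  calc ∑ k, ‖∑ i, V k i • s i‖ ^ 2
      = ∑ i, ∑ l, (∑ k, V k i * V k l) * ⟪s i, s l⟫ := by
        simp only [← real_inner_self_eq_norm_sq, sum_inner, inner_sum, real_inner_smul_left,
          real_inner_smul_right, sum_mul]
        rw [sum_comm]
        refine sum_congr rfl fun i _ => ?_
        rw [sum_comm]
        exact sum_congr rfl fun l _ => sum_congr rfl fun k _ => by rw [real_inner_comm (s l)]; ring
    _ = ∑ i, ‖s i‖ ^ 2 := by simp [hcol]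

theorem sum_inner_sum_smul_sq_of_orthogonal [DecidableEq ι] {V : Matrix ι ι ℝ} (hV : Vᵀ * V = 1)
    (s : ι → E) (x : E) : ∑ k, ⟪∑ i, V k i • s i, x⟫ ^ 2 = ∑ i, ⟪s i, x⟫ ^ 2 := by
  simpa [sum_inner, real_inner_smul_left, sq_abs] using
    sum_norm_sq_sum_smul_of_orthogonal hV fun i => ⟪s i, x⟫

end InnerProduct

theorem sum_mul_le_sum_filter_lt_of_antitone {n r : ℕ} {a t : Fin n → ℝ} (ha : Antitone a)
    (ha₀ : ∀ k, 0 ≤ a k) (ht₀ : ∀ k, 0 ≤ t k) (ht₁ : ∀ k, t k ≤ 1) (htr : ∑ k, t k ≤ r) :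
    ∑ k, a k * t k ≤ ∑ k : Fin n with k.val < r, a k := by
  rcases lt_or_ge r n with hrn | hnr
  · set ρ := a ⟨r, hrn⟩
    have hρ : 0 ≤ ρ := ha₀ _
    have hcard : (#{k : Fin n | (k : ℕ) < r} : ℝ) = r := by
      rw [Fin.card_filter_val_lt, min_eq_right hrn.le]
    have hterm : ∀ k : Fin n, a k * t k ≤ (if (k : ℕ) < r then a k - ρ else 0) + ρ * t k := by
      intro k
      split_ifs with hk
      · have : ρ ≤ a k := ha (Fin.le_def.mpr hk.le)
        nlinarith [mul_nonneg (sub_nonneg.2 this) (sub_nonneg.2 (ht₁ k))]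
      · have : a k ≤ ρ := ha (Fin.le_def.mpr (not_lt.mp hk))
        nlinarith [mul_nonneg (sub_nonneg.2 this) (ht₀ k)]
    calc ∑ k, a k * t k ≤ ∑ k : Fin n, ((if (k : ℕ) < r then a k - ρ else 0) + ρ * t k) :=
          sum_le_sum fun k _ => hterm k
      _ = ∑ k : Fin n with k.val < r, a k - ρ * (r - ∑ k, t k) := by
          rw [sum_add_distrib, ← sum_filter, sum_sub_distrib, sum_const, nsmul_eq_mul, hcard,
            ← mul_sum]
          ring
      _ ≤ ∑ k : Fin n with k.val < r, a k := by nlinarith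
  · have hall : ∀ k : Fin n, (k : ℕ) < r := fun k => k.isLt.trans_le hnr
    simp only [hall, filter_true]
    exact sum_le_sum fun k _ => mul_le_of_le_one_right (ha₀ k) (ht₁ k)

section Projection

variable {E : Type*} [NormedAddCommGroup E] [InnerProductSpace ℝ E]

theorem sum_sum_inner_sq_le_sum_filter_lt {n : ℕ} {w : Fin n → E}
    (hw : Pairwise fun k l => ⟪w k, w l⟫ = 0) (hw_anti : Antitone fun k => ‖w k‖)
    {J : Type*} [Fintype J] {ψ : J → E} (hψ : Orthonormal ℝ ψ) :
    ∑ k, ∑ j, ⟪w k, ψ j⟫ ^ 2 ≤ ∑ k : Fin n with k.val < Fintype.card J, ‖w k‖ ^ 2 := by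
  set t : Fin n → ℝ := fun k => (∑ j, ⟪w k, ψ j⟫ ^ 2) / ‖w k‖ ^ 2
  have hbessel : ∀ k, ∑ j, ⟪w k, ψ j⟫ ^ 2 ≤ ‖w k‖ ^ 2 := fun k => by
    simpa [real_inner_comm, sq_abs] using hψ.sum_inner_products_le (s := univ) (w k)
  have hweight : ∀ k, ‖w k‖ ^ 2 * t k = ∑ j, ⟪w k, ψ j⟫ ^ 2 := fun k => by
    rcases eq_or_ne (w k) 0 with hk | hk
    · simp [hk]
    · exact mul_div_cancel₀ _ (by positivity)
  have htr : ∑ k, t k ≤ Fintype.card J := by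
    calc ∑ k, t k = ∑ j, ∑ k, ⟪w k, ψ j⟫ ^ 2 / ‖w k‖ ^ 2 := by
          simp only [t, sum_div]
          exact sum_comm
      _ ≤ ∑ j : J, ‖ψ j‖ ^ 2 := sum_le_sum fun j _ => sum_inner_sq_div_norm_sq_le hw (ψ j)
      _ = Fintype.card J := by simp [hψ.1]
  calc ∑ k, ∑ j, ⟪w k, ψ j⟫ ^ 2 = ∑ k, ‖w k‖ ^ 2 * t k := by simp only [hweight]
    _ ≤ _ := sum_mul_le_sum_filter_lt_of_antitone
        (fun k l hkl => pow_le_pow_left₀ (norm_nonneg _) (hw_anti hkl) 2)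
        (fun k => by positivity) (fun k => by positivity)
        (fun k => div_le_one_of_le₀ (hbessel k) (by positivity)) htr

theorem sum_norm_sub_sum_inner_smul_sq_of_orthogonal {ι J : Type*} [Fintype ι] [DecidableEq ι]
    [Fintype J] {V : Matrix ι ι ℝ} (hV : Vᵀ * V = 1) (s : ι → E) {ψ : J → E}
    (hψ : Orthonormal ℝ ψ) :
    ∑ i, ‖s i - ∑ j, ⟪s i, ψ j⟫ • ψ j‖ ^ 2 =
      ∑ k, ‖∑ i, V k i • s i‖ ^ 2 - ∑ k, ∑ j, ⟪∑ i, V k i • s i, ψ j⟫ ^ 2 := by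
  simp only [hψ.norm_sub_sum_inner_smul_sq, sum_sub_distrib,
    sum_norm_sq_sum_smul_of_orthogonal hV]
  rw [sum_comm (γ := ι), sum_comm (γ := ι)]
  simp only [sum_inner_sum_smul_sq_of_orthogonal hV]

end Projection

section Snapshots

variable {H : Type*} [NormedAddCommGroup H] [InnerProductSpace ℝ H] {ι : Type*} [Fintype ι]
  {s : ι → H} {K : Matrix ι ι ℝ}

theorem inner_sum_smul_eq_dotProduct_mulVec (hK : ∀ i j, K i j = ⟪s j, s i⟫) (x y : ι → ℝ) :
    ⟪∑ i, x i • s i, ∑ i, y i • s i⟫ = x ⬝ᵥ (K *ᵥ y) := by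
  simp only [sum_inner, inner_sum, real_inner_smul_left, real_inner_smul_right, dotProduct,
    Matrix.mulVec, hK, mul_sum]
  rw [sum_comm]
  exact sum_congr rfl fun i _ => sum_congr rfl fun j _ => by rw [real_inner_comm]; ring

theorem inner_sum_smul_eigenvectors [DecidableEq ι] (hK : ∀ i j, K i j = ⟪s j, s i⟫)
    {lam : ι → ℝ} {V : Matrix ι ι ℝ} (heig : ∀ k, K *ᵥ V k = lam k • V k) (hV : V * Vᵀ = 1)
    (k l : ι) : ⟪∑ i, V k i • s i, ∑ i, V l i • s i⟫ = if k = l then lam k else 0 := by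
  have hrows : V k ⬝ᵥ V l = if k = l then 1 else 0 := by
    simpa [Matrix.mul_apply, Matrix.one_apply, dotProduct] using congr_fun (congr_fun hV k) l
  rw [inner_sum_smul_eq_dotProduct_mulVec hK, heig, dotProduct_smul, hrows, smul_eq_mul]
  split_ifs with hkl
  · rw [hkl, mul_one]
  · rw [mul_zero]

end Snapshots

theorem pod_optimality_general
    {H : Type*} [NormedAddCommGroup H] [InnerProductSpace ℝ H]
    (M : ℕ) (s : Fin M → H)
    (K : Matrix (Fin M) (Fin M) ℝ)
    (hK : ∀ i j, K i j = ⟪s j, s i⟫)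
    (lam : Fin M → ℝ) (v : Fin M → Fin M → ℝ)
    (hlam_sorted : ∀ k l : Fin M, k ≤ l → lam l ≤ lam k)
    (heig : ∀ k, K.mulVec (v k) = lam k • v k)
    (hortho : ∀ k l, (∑ j, v k j * v l j) = if k = l then (1:ℝ) else 0)
    (d : ℕ)
    (r : ℕ)
    (ψ : Fin r → H) (hψ : Orthonormal ℝ ψ) :
    ∑ j ∈ Finset.univ.filter (fun j : Fin M => r ≤ (j : ℕ) ∧ (j : ℕ) < d), lam j ≤
      ∑ i, ‖s i - ∑ j, ⟪s i, ψ j⟫ • ψ j‖ ^ 2 := by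
  set V : Matrix (Fin M) (Fin M) ℝ := Matrix.of v
  have hV : V * Vᵀ = 1 := by
    ext k l
    simpa [V, Matrix.mul_apply, Matrix.one_apply] using hortho k l
  set w : Fin M → H := fun k => ∑ i, V k i • s i
  have hw : ∀ k l, ⟪w k, w l⟫ = if k = l then lam k else 0 :=
    inner_sum_smul_eigenvectors hK heig hV
  have hw_sq : ∀ k, ‖w k‖ ^ 2 = lam k := fun k => by
    rw [← real_inner_self_eq_norm_sq, hw, if_pos rfl]
  have hw_anti : Antitone fun k => ‖w k‖ := fun k l hkl =>
    (pow_le_pow_iff_left₀ (norm_nonneg _) (norm_nonneg _) two_ne_zero).1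
      (by simpa only [hw_sq] using hlam_sorted k l hkl)
  have hkyfan := sum_sum_inner_sq_le_sum_filter_lt (fun k l hkl => by simp [hw, hkl]) hw_anti hψ
  calc ∑ j ∈ univ.filter (fun j : Fin M => r ≤ (j : ℕ) ∧ (j : ℕ) < d), lam j
      ≤ ∑ k : Fin M with ¬ k.val < r, lam k :=
        sum_le_sum_of_subset_of_nonneg (fun k => by simp +contextual)
          fun k _ _ => hw_sq k ▸ sq_nonneg _
    _ = ∑ k, lam k - ∑ k : Fin M with k.val < r, lam k := by
        rw [← sum_filter_add_sum_filter_not univ (fun k : Fin M => k.val < r)]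
        ring
    _ ≤ ∑ k, ‖w k‖ ^ 2 - ∑ k, ∑ j, ⟪w k, ψ j⟫ ^ 2 := by
        simp only [hw_sq, Fintype.card_fin] at hkyfan ⊢
        linarith
    _ = ∑ i, ‖s i - ∑ j, ⟪s i, ψ j⟫ • ψ j‖ ^ 2 :=
        (sum_norm_sub_sum_inner_smul_sq_of_orthogonal (mul_eq_one_comm.mp hV) s hψ).symm

/-- POD optimality (minimization problem (2.4)): for every `0 ≤ r ≤ d` and every orthonormal
family `ψ₁, …, ψ_r` in `H`, the total squared projection error of the snapshots onto the span
of the `ψ_j` is at least `∑_{j=r+1}^d λ_j`, the sum of the discarded POD eigenvalues. -/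
theorem pod_optimality
    {H : Type*} [NormedAddCommGroup H] [InnerProductSpace ℝ H]
    (M : ℕ) (s : Fin M → H)
    (K : Matrix (Fin M) (Fin M) ℝ)
    (hK : ∀ i j, K i j = ⟪s j, s i⟫)
    (lam : Fin M → ℝ) (v : Fin M → Fin M → ℝ)
    (hlam_sorted : ∀ k l : Fin M, k ≤ l → lam l ≤ lam k)
    (hlam_nonneg : ∀ k, 0 ≤ lam k)
    (heig : ∀ k, K.mulVec (v k) = lam k • v k)
    (hortho : ∀ k l, (∑ j, v k j * v l j) = if k = l then (1:ℝ) else 0)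
    (d : ℕ)
    (hd : ∀ k : Fin M, 0 < lam k ↔ (k : ℕ) < d)
    (r : ℕ) (hr : r ≤ d)
    (ψ : Fin r → H) (hψ : Orthonormal ℝ ψ) :
    ∑ j ∈ Finset.univ.filter (fun j : Fin M => r ≤ (j : ℕ) ∧ (j : ℕ) < d), lam j ≤
      ∑ i, ‖s i - ∑ j, ⟪s i, ψ j⟫ • ψ j‖ ^ 2 :=
  pod_optimality_general M s K hK lam v hlam_sorted heig hortho d r ψ hψ
end

section
/- Let H and H' be real inner product spaces, G : H → H' a continuous linear map, V a subspace of H, ν > 0 and T > 0. Assume the Poincaré–Friedrichs inequality: there is C > 0 with C ‖w‖² ≤ ‖G w‖² for all w ∈ H. Suppose φ, η : [0,T] → H are differentiable with continuous derivatives, φ(t) ∈ V for all t, and for all t ∈ [0,T] and all v ∈ V the error equation ⟪φ'(t), v⟫ + ν ⟪G φ(t), G v⟫ = ⟪η'(t), v⟫ holds. Then for every t ∈ [0,T], ‖φ(t)‖ ≤ e^{−C ν t} ‖φ(0)‖ + ∫₀ᵗ e^{−C ν (t−s)} ‖η'(s)‖ ds. (This is the pointwise-in-time L² estimate (3.12)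 of the paper for Case I, with the sharp constants from the Grönwall argument.) -/
/-!
Testing the error equation with `v = φ t` and using the Poincaré–Friedrichs inequality gives
`⟪φ', φ⟫ ≤ ‖η'‖ ‖φ‖ - C ν ‖φ‖²`, formally `‖φ‖' ≤ ‖η'‖ - C ν ‖φ‖`. As `‖φ‖` need not be
differentiable where `φ` vanishes, this is applied to the smooth `√(‖φ‖² + ε²)`, which obeys the
same inequality up to an extra forcing `C ν ε`. The integrating factor `exp (C ν t)` turns it into
the stated bound up to `O(ε)`, and `ε → 0`.
-/

open scoped RealInnerProductSpace

open Set Real Filter Topology MeasureTheory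

theorem ContinuousOn.exists_continuous_eqOn_Icc {β : Type*} [TopologicalSpace β] {f : ℝ → β}
    {a b : ℝ} (hab : a ≤ b) (hf : ContinuousOn f (Icc a b)) :
    ∃ g : ℝ → β, Continuous g ∧ EqOn g f (Icc a b) :=
  ⟨IccExtend hab ((Icc a b).domRestrict f), hf.domRestrict.Icc_extend',
    fun _ hx ↦ IccExtend_of_mem hab _ hx⟩

theorem le_exp_mul_add_integral_of_hasDerivAt_le {u u' a : ℝ → ℝ} {k T : ℝ}
    (ha : ContinuousOn a (Icc 0 T)) (hu : ∀ t ∈ Icc 0 T, HasDerivAt u (u' t) t)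
    (hu' : ∀ t ∈ Icc 0 T, u' t ≤ a t - k * u t) :
    ∀ t ∈ Icc 0 T,
      u t ≤ exp (-(k * t)) * u 0 + ∫ s in 0..t, exp (-(k * (t - s))) * a s := by
  intro t ht
  obtain ⟨g, hg, hga⟩ := ha.exists_continuous_eqOn_Icc (ht.1.trans ht.2)
  have hw (x) (hx : x ∈ Icc 0 T) :
      HasDerivAt (fun x ↦ exp (k * x) * u x) (exp (k * x) * (k * u x + u' x)) x := by
    refine (((hasDerivAt_id x).const_mul k).exp.mul (hu x hx)).congr_deriv ?_
    simp only [id, mul_one]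
    ring
  have hB (x : ℝ) : HasDerivAt (fun x ↦ u 0 + ∫ s in 0..x, exp (k * s) * g s)
      (exp (k * x) * g x) x :=
    ((by fun_prop : Continuous fun s ↦ exp (k * s) * g s).integral_hasStrictDerivAt 0 x)
      |>.hasDerivAt.const_add _
  have key : exp (k * t) * u t ≤ u 0 + ∫ s in 0..t, exp (k * s) * g s := by
    refine image_le_of_deriv_right_le_deriv_boundary
      (fun x hx ↦ (hw x hx).continuousAt.continuousWithinAt)
      (fun x hx ↦ (hw x (Ico_subset_Icc_self hx)).hasDerivWithinAt) (by simp)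
      (fun x _ ↦ (hB x).continuousAt.continuousWithinAt) (fun x _ ↦ (hB x).hasDerivWithinAt)
      (fun x hx ↦ ?_) ht
    have := hu' x (Ico_subset_Icc_self hx)
    rw [← hga (Ico_subset_Icc_self hx)] at this
    exact mul_le_mul_of_nonneg_left (by linarith) (exp_pos _).le
  calc u t = exp (-(k * t)) * (exp (k * t) * u t) := by
        rw [← mul_assoc, ← exp_add, neg_add_cancel, exp_zero, one_mul]
    _ ≤ exp (-(k * t)) * (u 0 + ∫ s in 0..t, exp (k * s) * g s) :=
        mul_le_mul_of_nonneg_left key (exp_pos _).le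
    _ = _ := by
        rw [mul_add, ← intervalIntegral.integral_const_mul]
        congr 1
        refine intervalIntegral.integral_congr fun s hs ↦ ?_
        simp only [hga (uIcc_subset_Icc ⟨le_rfl, ht.1.trans ht.2⟩ ht hs), ← mul_assoc,
          ← exp_add]
        ring_nf

theorem div_sqrt_sq_add_sq_le {p r a k ε : ℝ} (ha : 0 ≤ a) (hk : 0 ≤ k) (hε : 0 < ε)
    (hp : p ≤ a * r - k * r ^ 2) :
    p / √(r ^ 2 + ε ^ 2) ≤ a + k * ε - k * √(r ^ 2 + ε ^ 2) := by
  have hu : √(r ^ 2 + ε ^ 2) ^ 2 = r ^ 2 + ε ^ 2 := sq_sqrt (by positivity)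
  have hru : r ≤ √(r ^ 2 + ε ^ 2) := le_sqrt_of_sq_le (by nlinarith)
  have hεu : ε ≤ √(r ^ 2 + ε ^ 2) := le_sqrt_of_sq_le (by nlinarith)
  rw [div_le_iff₀ (by linarith)]
  nlinarith [mul_le_mul_of_nonneg_left hru ha,
    mul_nonneg (mul_nonneg hk hε.le) (sub_nonneg.2 hεu)]

section InnerProductSpace

variable {E : Type*} [NormedAddCommGroup E] [InnerProductSpace ℝ E]

theorem HasDerivAt.sqrt_norm_sq_add_sq {f : ℝ → E} {f' : E} {t : ℝ} (hf : HasDerivAt f f' t)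
    {ε : ℝ} (hε : ε ≠ 0) :
    HasDerivAt (fun s ↦ √(‖f s‖ ^ 2 + ε ^ 2)) (⟪f', f t⟫ / √(‖f t‖ ^ 2 + ε ^ 2)) t := by
  convert (hf.norm_sq.add_const (ε ^ 2)).sqrt (by positivity) using 1
  rw [real_inner_comm]
  field_simp

variable {f f' : ℝ → E} {a : ℝ → ℝ} {k T : ℝ}

theorem norm_le_exp_mul_add_integral_add_mul_of_inner_le (hk : 0 ≤ k)
    (ha : ContinuousOn a (Icc 0 T)) (ha₀ : ∀ t ∈ Icc 0 T, 0 ≤ a t)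
    (hf : ∀ t ∈ Icc 0 T, HasDerivAt f (f' t) t)
    (hff' : ∀ t ∈ Icc 0 T, ⟪f' t, f t⟫ ≤ a t * ‖f t‖ - k * ‖f t‖ ^ 2)
    {ε : ℝ} (hε : 0 < ε) {t : ℝ} (ht : t ∈ Icc 0 T) :
    ‖f t‖ ≤ exp (-(k * t)) * ‖f 0‖ + (∫ s in 0..t, exp (-(k * (t - s))) * a s) +
      ε * (exp (-(k * t)) + ∫ s in 0..t, exp (-(k * (t - s))) * k) := by
  have hu := le_exp_mul_add_integral_of_hasDerivAt_le (a := fun s ↦ a s + k * ε)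
    (ha.add continuousOn_const)
    (fun s hs ↦ (hf s hs).sqrt_norm_sq_add_sq hε.ne')
    (fun s hs ↦ div_sqrt_sq_add_sq_le (ha₀ s hs) hk hε (hff' s hs)) t ht
  have hft : ‖f t‖ ≤ √(‖f t‖ ^ 2 + ε ^ 2) := le_sqrt_of_sq_le (by nlinarith)
  have hf0 : √(‖f 0‖ ^ 2 + ε ^ 2) ≤ ‖f 0‖ + ε :=
    sqrt_le_iff.2 ⟨by positivity, by nlinarith [norm_nonneg (f 0)]⟩
  have hsplit : ∫ s in 0..t, exp (-(k * (t - s))) * (a s + k * ε) =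
      (∫ s in 0..t, exp (-(k * (t - s))) * a s) +
        ε * ∫ s in 0..t, exp (-(k * (t - s))) * k := by
    have hint : IntervalIntegrable (fun s ↦ exp (-(k * (t - s))) * a s) volume 0 t :=
      ((by fun_prop : Continuous fun s ↦ exp (-(k * (t - s)))).continuousOn.mul
        (ha.mono (uIcc_subset_Icc ⟨le_rfl, ht.1.trans ht.2⟩ ht))).intervalIntegrable
    rw [← intervalIntegral.integral_const_mul, ← intervalIntegral.integral_add hint
      ((by fun_prop : Continuous fun s ↦ ε * (exp (-(k * (t - s))) * k)).intervalIntegrable 0 t)]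
    exact intervalIntegral.integral_congr fun s _ ↦ by ring
  rw [hsplit] at hu
  linarith [mul_le_mul_of_nonneg_left hf0 (exp_pos (-(k * t))).le]

theorem norm_le_exp_mul_add_integral_of_inner_le (hk : 0 ≤ k)
    (ha : ContinuousOn a (Icc 0 T)) (ha₀ : ∀ t ∈ Icc 0 T, 0 ≤ a t)
    (hf : ∀ t ∈ Icc 0 T, HasDerivAt f (f' t) t)
    (hff' : ∀ t ∈ Icc 0 T, ⟪f' t, f t⟫ ≤ a t * ‖f t‖ - k * ‖f t‖ ^ 2) :
    ∀ t ∈ Icc 0 T,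
      ‖f t‖ ≤ exp (-(k * t)) * ‖f 0‖ + ∫ s in 0..t, exp (-(k * (t - s))) * a s := by
  intro t ht
  set R := exp (-(k * t)) * ‖f 0‖ + ∫ s in 0..t, exp (-(k * (t - s))) * a s
  set c := exp (-(k * t)) + ∫ s in 0..t, exp (-(k * (t - s))) * k
  have hlim : Tendsto (fun ε ↦ R + ε * c) (𝓝[>] 0) (𝓝 R) := by
    have hcont : Continuous fun ε ↦ R + ε * c := by fun_prop
    simpa using (hcont.tendsto 0).mono_left nhdsWithin_le_nhds
  exact ge_of_tendsto hlim <| eventually_nhdsWithin_of_forall fun _ hε ↦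
    norm_le_exp_mul_add_integral_add_mul_of_inner_le hk ha ha₀ hf hff' hε ht

theorem real_inner_le_of_add_mul_inner_self_eq {F : Type*} [NormedAddCommGroup F]
    [InnerProductSpace ℝ F] {x x' y' : E} {z : F} {C ν : ℝ} (hν : 0 ≤ ν)
    (hz : C * ‖x‖ ^ 2 ≤ ‖z‖ ^ 2) (h : ⟪x', x⟫ + ν * ⟪z, z⟫ = ⟪y', x⟫) :
    ⟪x', x⟫ ≤ ‖y'‖ * ‖x‖ - C * ν * ‖x‖ ^ 2 := by
  rw [real_inner_self_eq_norm_sq] at h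
  nlinarith [real_inner_le_norm y' x, mul_le_mul_of_nonneg_left hz hν]

end InnerProductSpace

theorem case1_pointwise_L2_estimate_general
    {H H' : Type*} [NormedAddCommGroup H] [InnerProductSpace ℝ H]
    [NormedAddCommGroup H'] [InnerProductSpace ℝ H']
    (G : H →L[ℝ] H') (V : Submodule ℝ H)
    (ν T : ℝ) (hν : 0 < ν)
    (C : ℝ) (hC : 0 < C)
    (hPF : ∀ w : H, C * ‖w‖ ^ 2 ≤ ‖G w‖ ^ 2)
    (φ φ' η' : ℝ → H)
    (hφ : ∀ t ∈ Set.Icc (0:ℝ) T, HasDerivAt φ (φ' t) t)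
    (hη'c : ContinuousOn η' (Set.Icc (0:ℝ) T))
    (hφV : ∀ t ∈ Set.Icc (0:ℝ) T, φ t ∈ V)
    (herr : ∀ t ∈ Set.Icc (0:ℝ) T, ∀ v ∈ V,
      ⟪φ' t, v⟫ + ν * ⟪G (φ t), G v⟫ = ⟪η' t, v⟫) :
    ∀ t ∈ Set.Icc (0:ℝ) T,
      ‖φ t‖ ≤ Real.exp (-(C * ν * t)) * ‖φ 0‖ +
        ∫ s in (0:ℝ)..t, Real.exp (-(C * ν * (t - s))) * ‖η' s‖ :=
  norm_le_exp_mul_add_integral_of_inner_le (mul_nonneg hC.le hν.le) hη'c.norm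
    (fun _ _ ↦ norm_nonneg _) hφ
    fun t ht ↦ real_inner_le_of_add_mul_inner_self_eq hν.le (hPF _) (herr t ht _ (hφV t ht))

/-- Pointwise-in-time L² estimate (3.12), Case I: under the Poincaré–Friedrichs inequality
`C ‖w‖² ≤ ‖G w‖²` and the error equation `⟪φ', v⟫ + ν ⟪G φ, G v⟫ = ⟪η', v⟫` for all `v ∈ V`,
one has `‖φ(t)‖ ≤ e^{−Cνt} ‖φ(0)‖ + ∫₀ᵗ e^{−Cν(t−s)} ‖η'(s)‖ ds`. -/
theorem case1_pointwise_L2_estimate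
    {H H' : Type*} [NormedAddCommGroup H] [InnerProductSpace ℝ H]
    [NormedAddCommGroup H'] [InnerProductSpace ℝ H']
    (G : H →L[ℝ] H') (V : Submodule ℝ H)
    (ν T : ℝ) (hν : 0 < ν) (hT : 0 < T)
    (C : ℝ) (hC : 0 < C)
    (hPF : ∀ w : H, C * ‖w‖ ^ 2 ≤ ‖G w‖ ^ 2)
    (φ φ' η η' : ℝ → H)
    (hφ : ∀ t ∈ Set.Icc (0:ℝ) T, HasDerivAt φ (φ' t) t)
    (hφ'c : ContinuousOn φ' (Set.Icc (0:ℝ) T))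
    (hη : ∀ t ∈ Set.Icc (0:ℝ) T, HasDerivAt η (η' t) t)
    (hη'c : ContinuousOn η' (Set.Icc (0:ℝ) T))
    (hφV : ∀ t ∈ Set.Icc (0:ℝ) T, φ t ∈ V)
    (herr : ∀ t ∈ Set.Icc (0:ℝ) T, ∀ v ∈ V,
      ⟪φ' t, v⟫ + ν * ⟪G (φ t), G v⟫ = ⟪η' t, v⟫) :
    ∀ t ∈ Set.Icc (0:ℝ) T,
      ‖φ t‖ ≤ Real.exp (-(C * ν * t)) * ‖φ 0‖ +
        ∫ s in (0:ℝ)..t, Real.exp (-(C * ν * (t - s))) * ‖η' s‖ :=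
  case1_pointwise_L2_estimate_general G V ν T hν C hC hPF φ φ' η' hφ hη'c hφV herr
end

section
/- Let H and H' be real inner product spaces, G : H → H' a continuous linear map, V a subspace of H, ν > 0 and T > 0. Assume the Poincaré–Friedrichs inequality: there is C > 0 with C ‖w‖² ≤ ‖G w‖² for all w ∈ H. Suppose u, u_r, w : [0,T] → H are differentiable with continuous derivatives, u_r(t) ∈ V and w(t) ∈ V for all t, define e := u − u_r and η := u − w, and assume: (i) the Galerkin error equation ⟪e'(t), v⟫ + ν ⟪G e(t), G v⟫ = 0 holds for all t ∈ [0,T] and all v ∈ V; (ii) the Ritz-projection property ⟪G η(t), G v⟫ = 0 holds for all t ∈ [0,T] and all v ∈ V. Then for every t ∈ [0,T], ‖e(t)‖ ≤ ‖η(t)‖ + e^{−C ν t} ( ‖e(0)‖ + ‖η(0)‖ ) + ∫₀ᵗ e^{−C ν (t−s)} ‖η'(s)‖ ds. (This is the main Case I error estimate (3.15) of the paper, showing that when the Ritz projection error η is optimal with respect to r, the POD Galerkin error e is optimal with respect to r; the constants are the sharp ones from the Grönwall argument.) -/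
open scoped RealInnerProductSpace
open Set MeasureTheory

/-! With `η = u − w` and `θ = w − u_r ∈ V`, the error splits as `e = η + θ`. Testing the Galerkin
error equation with `θ` and using Ritz orthogonality and the Poincaré–Friedrichs inequality gives
the energy inequality `⟪θ', θ⟫ ≤ −Cν‖θ‖² + ‖η'‖‖θ‖`. A Grönwall argument for `‖θ‖` turns it into
`‖θ(t)‖ ≤ e^{−Cνt}‖θ(0)‖ + ∫₀ᵗ e^{−Cν(t−s)}‖η'(s)‖ ds`, and the triangle inequality for
`e(t) = η(t) + θ(t)` and `θ(0) = e(0) − η(0)` finishes the proof. -/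

section

variable {E : Type*} [NormedAddCommGroup E] [InnerProductSpace ℝ E]

/- `‖φ‖` need not be differentiable where `φ` vanishes, so we work with the smooth
`√(‖φ‖² + ε²)` and let `ε → 0`. -/
theorem norm_le_norm_add_integral_of_inner_deriv_le {φ φ' : ℝ → E} {g : ℝ → ℝ} {a b : ℝ}
    (hab : a ≤ b) (hφ : ContinuousOn φ (Icc a b))
    (hφ' : ∀ s ∈ Ioo a b, HasDerivAt φ (φ' s) s)
    (hg : IntegrableOn g (Icc a b)) (hg0 : ∀ s ∈ Ioo a b, 0 ≤ g s)
    (hle : ∀ s ∈ Ioo a b, ⟪φ' s, φ s⟫ ≤ g s * ‖φ s‖) :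
    ‖φ b‖ ≤ ‖φ a‖ + ∫ s in a..b, g s := by
  refine le_of_forall_pos_le_add fun ε hε => ?_
  set F : ℝ → ℝ := fun s => √(‖φ s‖ ^ 2 + ε ^ 2)
  have hFpos : ∀ s, 0 < F s := fun s => Real.sqrt_pos.2 (by positivity)
  have hnorm_le_F : ∀ s, ‖φ s‖ ≤ F s := fun s =>
    (Real.le_sqrt (norm_nonneg _) (by positivity)).2 (by nlinarith)
  have hF_le : ∀ s, F s ≤ ‖φ s‖ + ε := fun s =>
    Real.sqrt_le_iff.2 ⟨by positivity, by nlinarith [norm_nonneg (φ s)]⟩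
  have hFderiv : ∀ s ∈ Ioo a b, HasDerivAt F (2 * ⟪φ s, φ' s⟫ / (2 * F s)) s := fun s hs =>
    ((hφ' s hs).norm_sq.add_const _).sqrt (by positivity)
  have hFcont : ContinuousOn F (Icc a b) :=
    ((continuous_norm.comp_continuousOn hφ).pow 2 |>.add continuousOn_const).sqrt
  have hF_sub : F b - F a ≤ ∫ s in a..b, g s := by
    refine intervalIntegral.sub_le_integral_of_hasDeriv_right_of_le hab hFcont
      (fun s hs => (hFderiv s hs).hasDerivWithinAt) hg fun s hs => ?_
    rw [mul_div_mul_left _ _ two_ne_zero, div_le_iff₀ (hFpos s), real_inner_comm]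
    exact (hle s hs).trans (mul_le_mul_of_nonneg_left (hnorm_le_F s) (hg0 s hs))
  linarith [hnorm_le_F b, hF_le a]

/- `e^{ks} θ(s)` satisfies the previous lemma with `g = e^{ks} ρ`: the weight absorbs the
damping term `-k‖θ‖²`. -/
theorem norm_le_of_inner_deriv_le_neg_mul_norm_sq_add {θ θ' : ℝ → E} {ρ : ℝ → ℝ} {k a b : ℝ}
    (hab : a ≤ b) (hθ : ContinuousOn θ (Icc a b))
    (hθ' : ∀ s ∈ Ioo a b, HasDerivAt θ (θ' s) s)
    (hρ : IntegrableOn ρ (Icc a b)) (hρ0 : ∀ s ∈ Ioo a b, 0 ≤ ρ s)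
    (hle : ∀ s ∈ Ioo a b, ⟪θ' s, θ s⟫ ≤ -k * ‖θ s‖ ^ 2 + ρ s * ‖θ s‖) :
    ‖θ b‖ ≤ Real.exp (-(k * (b - a))) * ‖θ a‖ +
      ∫ s in a..b, Real.exp (-(k * (b - s))) * ρ s := by
  set c : ℝ → ℝ := fun s => Real.exp (k * s) with hc
  have hc_deriv : ∀ s, HasDerivAt c (k * c s) s := fun s => by
    simpa [mul_comm] using ((hasDerivAt_id s).const_mul k).exp
  have hc_cont : Continuous c := by fun_prop
  have hnorm : ∀ s, ‖(c • θ) s‖ = c s * ‖θ s‖ := fun s => by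
    rw [Pi.smul_apply', norm_smul, Real.norm_of_nonneg (Real.exp_pos _).le]
  have hweighted := norm_le_norm_add_integral_of_inner_deriv_le (φ := c • θ)
    (φ' := fun s => c s • θ' s + (k * c s) • θ s) (g := fun s => c s * ρ s) hab
    (hc_cont.continuousOn.smul hθ) (fun s hs => (hc_deriv s).smul (hθ' s hs))
    (hρ.continuousOn_mul hc_cont.continuousOn isCompact_Icc)
    (fun s hs => mul_nonneg (Real.exp_pos _).le (hρ0 s hs)) fun s hs => by
      have hinner : ⟪c s • θ' s + (k * c s) • θ s, (c • θ) s⟫ =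
          c s ^ 2 * (⟪θ' s, θ s⟫ + k * ‖θ s‖ ^ 2) := by
        rw [Pi.smul_apply', inner_add_left, real_inner_smul_left, real_inner_smul_left,
          real_inner_smul_right, real_inner_smul_right, real_inner_self_eq_norm_sq]
        ring
      rw [hinner, hnorm]
      nlinarith [mul_le_mul_of_nonneg_left (hle s hs) (sq_nonneg (c s))]
  rw [hnorm, hnorm] at hweighted
  have hexp : ∀ s, Real.exp (-(k * (b - s))) = Real.exp (-(k * b)) * c s := fun s => by
    rw [hc, ← Real.exp_add]; ring_nf
  calc ‖θ b‖ = Real.exp (-(k * b)) * (c b * ‖θ b‖) := by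
        rw [← mul_assoc, ← hexp, sub_self, mul_zero, neg_zero, Real.exp_zero, one_mul]
    _ ≤ Real.exp (-(k * b)) * (c a * ‖θ a‖ + ∫ s in a..b, c s * ρ s) :=
        mul_le_mul_of_nonneg_left hweighted (Real.exp_pos _).le
    _ = _ := by
        simp only [hexp, mul_add, mul_assoc, intervalIntegral.integral_const_mul]

end

theorem inner_le_neg_mul_norm_sq_add_of_galerkin_of_ritz {H H' : Type*}
    [NormedAddCommGroup H] [InnerProductSpace ℝ H]
    [NormedAddCommGroup H'] [InnerProductSpace ℝ H'] (G : H →L[ℝ] H') {ν C : ℝ} (hν : 0 ≤ ν)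
    {η θ η' θ' : H} (hPF : C * ‖θ‖ ^ 2 ≤ ‖G θ‖ ^ 2)
    (hGalerkin : ⟪η' + θ', θ⟫ + ν * ⟪G (η + θ), G θ⟫ = 0) (hRitz : ⟪G η, G θ⟫ = 0) :
    ⟪θ', θ⟫ ≤ -(C * ν) * ‖θ‖ ^ 2 + ‖η'‖ * ‖θ‖ := by
  rw [inner_add_left, map_add, inner_add_left, hRitz, zero_add,
    real_inner_self_eq_norm_sq] at hGalerkin
  nlinarith [neg_le_of_abs_le (abs_real_inner_le_norm η' θ), mul_le_mul_of_nonneg_left hPF hν]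

theorem case1_main_error_estimate_general
    {H H' : Type*} [NormedAddCommGroup H] [InnerProductSpace ℝ H]
    [NormedAddCommGroup H'] [InnerProductSpace ℝ H']
    (G : H →L[ℝ] H') (V : Submodule ℝ H)
    (ν T : ℝ) (hν : 0 < ν)
    (C : ℝ)
    (hPF : ∀ w : H, C * ‖w‖ ^ 2 ≤ ‖G w‖ ^ 2)
    (u u' ur ur' w w' : ℝ → H)
    (hu'c : ContinuousOn u' (Set.Icc (0:ℝ) T))
    (hur : ∀ t ∈ Set.Icc (0:ℝ) T, HasDerivAt ur (ur' t) t)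
    (hw : ∀ t ∈ Set.Icc (0:ℝ) T, HasDerivAt w (w' t) t)
    (hw'c : ContinuousOn w' (Set.Icc (0:ℝ) T))
    (hurV : ∀ t ∈ Set.Icc (0:ℝ) T, ur t ∈ V)
    (hwV : ∀ t ∈ Set.Icc (0:ℝ) T, w t ∈ V)
    (hGalerkin : ∀ t ∈ Set.Icc (0:ℝ) T, ∀ v ∈ V,
      ⟪u' t - ur' t, v⟫ + ν * ⟪G (u t - ur t), G v⟫ = 0)
    (hRitz : ∀ t ∈ Set.Icc (0:ℝ) T, ∀ v ∈ V,
      ⟪G (u t - w t), G v⟫ = 0) :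
    ∀ t ∈ Set.Icc (0:ℝ) T,
      ‖u t - ur t‖ ≤ ‖u t - w t‖ +
        Real.exp (-(C * ν * t)) * (‖u 0 - ur 0‖ + ‖u 0 - w 0‖) +
        ∫ s in (0:ℝ)..t, Real.exp (-(C * ν * (t - s))) * ‖u' s - w' s‖ := by
  rintro t ⟨ht0, htT⟩
  have hsub : Icc 0 t ⊆ Icc 0 T := Icc_subset_Icc_right htT
  have hθ' : ∀ s ∈ Icc 0 t, HasDerivAt (w - ur) (w' s - ur' s) s := fun s hs =>
    (hw s (hsub hs)).sub (hur s (hsub hs))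
  have henergy : ∀ s ∈ Ioo 0 t, ⟪w' s - ur' s, w s - ur s⟫ ≤
      -(C * ν) * ‖w s - ur s‖ ^ 2 + ‖u' s - w' s‖ * ‖w s - ur s‖ := fun s hs => by
    have hs := hsub (Ioo_subset_Icc_self hs)
    have hθV := V.sub_mem (hwV s hs) (hurV s hs)
    refine inner_le_neg_mul_norm_sq_add_of_galerkin_of_ritz G hν.le (hPF _) ?_ (hRitz s hs _ hθV)
    simpa only [sub_add_sub_cancel] using hGalerkin s hs _ hθV
  have hθ := norm_le_of_inner_deriv_le_neg_mul_norm_sq_add ht0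
    (fun s hs => (hθ' s hs).continuousAt.continuousWithinAt)
    (fun s hs => hθ' s (Ioo_subset_Icc_self hs))
    (((hu'c.sub hw'c).norm.mono hsub).integrableOn_compact isCompact_Icc)
    (fun s _ => norm_nonneg _) henergy
  have he : ‖u t - ur t‖ ≤ ‖u t - w t‖ + ‖w t - ur t‖ := by
    simpa only [sub_add_sub_cancel] using norm_add_le (u t - w t) (w t - ur t)
  have he₀ : ‖w 0 - ur 0‖ ≤ ‖u 0 - ur 0‖ + ‖u 0 - w 0‖ := by
    simpa only [sub_sub_sub_cancel_left] using norm_sub_le (u 0 - ur 0) (u 0 - w 0)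
  simp only [Pi.sub_apply, sub_zero] at hθ
  linarith [mul_le_mul_of_nonneg_left he₀ (Real.exp_pos (-(C * ν * t))).le]

/-- Main Case I error estimate (3.15): under the Poincaré–Friedrichs inequality, the Galerkin
error equation for `e = u − u_r`, and the Ritz-projection property for `η = u − w`, one has
`‖e(t)‖ ≤ ‖η(t)‖ + e^{−Cνt}(‖e(0)‖ + ‖η(0)‖) + ∫₀ᵗ e^{−Cν(t−s)} ‖η'(s)‖ ds`. -/
theorem case1_main_error_estimate
    {H H' : Type*} [NormedAddCommGroup H] [InnerProductSpace ℝ H]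
    [NormedAddCommGroup H'] [InnerProductSpace ℝ H']
    (G : H →L[ℝ] H') (V : Submodule ℝ H)
    (ν T : ℝ) (hν : 0 < ν) (hT : 0 < T)
    (C : ℝ) (hC : 0 < C)
    (hPF : ∀ w : H, C * ‖w‖ ^ 2 ≤ ‖G w‖ ^ 2)
    (u u' ur ur' w w' : ℝ → H)
    (hu : ∀ t ∈ Set.Icc (0:ℝ) T, HasDerivAt u (u' t) t)
    (hu'c : ContinuousOn u' (Set.Icc (0:ℝ) T))
    (hur : ∀ t ∈ Set.Icc (0:ℝ) T, HasDerivAt ur (ur' t) t)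
    (hur'c : ContinuousOn ur' (Set.Icc (0:ℝ) T))
    (hw : ∀ t ∈ Set.Icc (0:ℝ) T, HasDerivAt w (w' t) t)
    (hw'c : ContinuousOn w' (Set.Icc (0:ℝ) T))
    (hurV : ∀ t ∈ Set.Icc (0:ℝ) T, ur t ∈ V)
    (hwV : ∀ t ∈ Set.Icc (0:ℝ) T, w t ∈ V)
    (hGalerkin : ∀ t ∈ Set.Icc (0:ℝ) T, ∀ v ∈ V,
      ⟪u' t - ur' t, v⟫ + ν * ⟪G (u t - ur t), G v⟫ = 0)
    (hRitz : ∀ t ∈ Set.Icc (0:ℝ) T, ∀ v ∈ V,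
      ⟪G (u t - w t), G v⟫ = 0) :
    ∀ t ∈ Set.Icc (0:ℝ) T,
      ‖u t - ur t‖ ≤ ‖u t - w t‖ +
        Real.exp (-(C * ν * t)) * (‖u 0 - ur 0‖ + ‖u 0 - w 0‖) +
        ∫ s in (0:ℝ)..t, Real.exp (-(C * ν * (t - s))) * ‖u' s - w' s‖ :=
  case1_main_error_estimate_general G V ν T hν C hPF u u' ur ur' w w' hu'c hur hw hw'c hurV hwV
    hGalerkin hRitz
end

section
/- Let H and H' be real inner product spaces, G : H → H' a continuous linear map, V a subspace of H, ν > 0 and T > 0. Suppose φ, η : [0,T] → H are differentiable with continuous derivatives, φ(t) ∈ V for all t, and for all t ∈ [0,T] and all v ∈ V the error equation ⟪φ'(t), v⟫ + ν ⟪G φ(t), G v⟫ = ⟪η'(t), v⟫ holds. Then for every t ∈ [0,T], ‖G φ(t)‖² ≤ ‖G φ(0)‖² + (1/ν) ∫₀ᵗ ‖η'(s)‖² ds. (This is the integrated form of the Case I H¹-seminorm estimate (3.30) of the paper, obtained by testing the error equation with v = φ'(t) and applying Young's inequality; note that no POD inverse estimate and no factor C_inv(r) is needed, so the estimate is optimal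 with respect to r.) -/
/-!
Testing the error equation with `v = φ'(t)` is legitimate although `φ'(t)` need only lie in the
closure of `V`: it is a limit of difference quotients of `φ`, and both sides of the equation are
continuous in `v`. This gives `‖φ'‖² + ν ⟪G φ, G φ'⟫ = ⟪η', φ'⟫`, and Young's inequality bounds
`d/dt ‖G φ‖² = 2 ⟪G φ, G φ'⟫` by `‖η'‖² / (2ν)`; integrate over `[0, t]`.
-/

open scoped RealInnerProductSpace
open Set Filter Topology

theorem HasDerivAt.mem_topologicalClosure_of_eventually_mem {E : Type*} [NormedAddCommGroup E]
    [NormedSpace ℝ E] {V : Submodule ℝ E} {f : ℝ → E} {f' : E} {x : ℝ} (hf : HasDerivAt f f' x)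
    (hV : ∀ᶠ y in 𝓝 x, f y ∈ V) : f' ∈ V.topologicalClosure := by
  refine V.isClosed_topologicalClosure.mem_of_tendsto hf.tendsto_slope ?_
  filter_upwards [nhdsWithin_le_nhds hV] with y hy
  rw [slope_def_module]
  exact V.le_topologicalClosure (V.smul_mem _ (V.sub_mem hy hV.self_of_nhds))

theorem le_norm_sq_div_four_of_norm_sq_add_eq_inner {H : Type*} [NormedAddCommGroup H]
    [InnerProductSpace ℝ H] {p q : H} {a : ℝ} (h : ‖p‖ ^ 2 + a = ⟪q, p⟫) : a ≤ ‖q‖ ^ 2 / 4 := by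
  nlinarith [real_inner_le_norm q p, sq_nonneg (‖q‖ - 2 * ‖p‖)]

section ErrorEquation

variable {H H' : Type*} [NormedAddCommGroup H] [InnerProductSpace ℝ H]
  [NormedAddCommGroup H'] [InnerProductSpace ℝ H'] (G : H →L[ℝ] H') {V : Submodule ℝ H} {ν : ℝ}

theorem inner_add_mul_inner_eq_of_mem_topologicalClosure {a b c : H}
    (h : ∀ v ∈ V, ⟪a, v⟫ + ν * ⟪G b, G v⟫ = ⟪c, v⟫) :
    ∀ v ∈ V.topologicalClosure, ⟪a, v⟫ + ν * ⟪G b, G v⟫ = ⟪c, v⟫ :=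
  Set.EqOn.closure h (by fun_prop) (by fun_prop)

theorem two_mul_inner_le_of_errorEquation (hν : 0 < ν) {a b c : H}
    (ha : a ∈ V.topologicalClosure) (h : ∀ v ∈ V, ⟪a, v⟫ + ν * ⟪G b, G v⟫ = ⟪c, v⟫) :
    2 * ⟪G b, G a⟫ ≤ 1 / ν * ‖c‖ ^ 2 := by
  have htested : ‖a‖ ^ 2 + ν * ⟪G b, G a⟫ = ⟪c, a⟫ := by
    rw [← real_inner_self_eq_norm_sq]
    exact inner_add_mul_inner_eq_of_mem_topologicalClosure G h a ha
  have hyoung := le_norm_sq_div_four_of_norm_sq_add_eq_inner htested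
  rw [one_div_mul_eq_div, le_div_iff₀ hν]
  nlinarith [sq_nonneg ‖c‖]

end ErrorEquation

theorem case1_H1_seminorm_estimate_general
    {H H' : Type*} [NormedAddCommGroup H] [InnerProductSpace ℝ H]
    [NormedAddCommGroup H'] [InnerProductSpace ℝ H']
    (G : H →L[ℝ] H') (V : Submodule ℝ H)
    (ν T : ℝ) (hν : 0 < ν)
    (φ φ' η' : ℝ → H)
    (hφ : ∀ t ∈ Set.Icc (0:ℝ) T, HasDerivAt φ (φ' t) t)
    (hη'c : ContinuousOn η' (Set.Icc (0:ℝ) T))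
    (hφV : ∀ t ∈ Set.Icc (0:ℝ) T, φ t ∈ V)
    (herr : ∀ t ∈ Set.Icc (0:ℝ) T, ∀ v ∈ V,
      ⟪φ' t, v⟫ + ν * ⟪G (φ t), G v⟫ = ⟪η' t, v⟫) :
    ∀ t ∈ Set.Icc (0:ℝ) T,
      ‖G (φ t)‖ ^ 2 ≤ ‖G (φ 0)‖ ^ 2 + (1 / ν) * ∫ s in (0:ℝ)..t, ‖η' s‖ ^ 2 := by
  intro t ht
  have hsub : Icc 0 t ⊆ Icc 0 T := Icc_subset_Icc_right ht.2
  have hφ'V : ∀ s ∈ Ioo 0 t, φ' s ∈ V.topologicalClosure := fun s hs =>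
    (hφ s (hsub (Ioo_subset_Icc_self hs))).mem_topologicalClosure_of_eventually_mem
      (eventually_of_mem (Ioo_mem_nhds hs.1 hs.2) fun y hy =>
        hφV y (hsub (Ioo_subset_Icc_self hy)))
  have hderiv : ∀ s ∈ Icc 0 t,
      HasDerivAt (fun s => ‖G (φ s)‖ ^ 2) (2 * ⟪G (φ s), G (φ' s)⟫) s := fun s hs =>
    (G.hasFDerivAt.comp_hasDerivAt s (hφ s (hsub hs))).norm_sq
  have henergy := intervalIntegral.sub_le_integral_of_hasDeriv_right_of_le ht.1
    (φ := fun s => 1 / ν * ‖η' s‖ ^ 2)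
    (fun s hs => (hderiv s hs).continuousAt.continuousWithinAt)
    (fun s hs => (hderiv s (Ioo_subset_Icc_self hs)).hasDerivWithinAt)
    ((continuousOn_const.mul (hη'c.norm.pow 2)).mono hsub).integrableOn_Icc
    (fun s hs => two_mul_inner_le_of_errorEquation G hν (hφ'V s hs)
      (herr s (hsub (Ioo_subset_Icc_self hs))))
  rw [intervalIntegral.integral_const_mul] at henergy
  linarith

/-- Integrated Case I H¹-seminorm estimate (3.30): under the error equation
`⟪φ', v⟫ + ν ⟪G φ, G v⟫ = ⟪η', v⟫` for all `v ∈ V`, one has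
`‖G φ(t)‖² ≤ ‖G φ(0)‖² + (1/ν) ∫₀ᵗ ‖η'(s)‖² ds`, with no inverse-estimate factor. -/
theorem case1_H1_seminorm_estimate
    {H H' : Type*} [NormedAddCommGroup H] [InnerProductSpace ℝ H]
    [NormedAddCommGroup H'] [InnerProductSpace ℝ H']
    (G : H →L[ℝ] H') (V : Submodule ℝ H)
    (ν T : ℝ) (hν : 0 < ν) (hT : 0 < T)
    (φ φ' η η' : ℝ → H)
    (hφ : ∀ t ∈ Set.Icc (0:ℝ) T, HasDerivAt φ (φ' t) t)
    (hφ'c : ContinuousOn φ' (Set.Icc (0:ℝ) T))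
    (hη : ∀ t ∈ Set.Icc (0:ℝ) T, HasDerivAt η (η' t) t)
    (hη'c : ContinuousOn η' (Set.Icc (0:ℝ) T))
    (hφV : ∀ t ∈ Set.Icc (0:ℝ) T, φ t ∈ V)
    (herr : ∀ t ∈ Set.Icc (0:ℝ) T, ∀ v ∈ V,
      ⟪φ' t, v⟫ + ν * ⟪G (φ t), G v⟫ = ⟪η' t, v⟫) :
    ∀ t ∈ Set.Icc (0:ℝ) T,
      ‖G (φ t)‖ ^ 2 ≤ ‖G (φ 0)‖ ^ 2 + (1 / ν) * ∫ s in (0:ℝ)..t, ‖η' s‖ ^ 2 :=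
  case1_H1_seminorm_estimate_general G V ν T hν φ φ' η' hφ hη'c hφV herr
end

section
/- Let H and H' be real inner product spaces, G : H → H' a continuous linear map, V a subspace of H, ν > 0 and T > 0. Suppose φ : [0,T] → H is differentiable with continuous derivative and φ(t) ∈ V for all t, η : [0,T] → H is continuous, and for all t ∈ [0,T] and all v ∈ V the error equation ⟪φ'(t), v⟫ + ν ⟪G φ(t), G v⟫ = ν ⟪G η(t), G v⟫ holds. Then for every t ∈ [0,T], ‖φ(t)‖² ≤ ‖φ(0)‖² + ν ∫₀ᵗ ‖G η(s)‖² ds. (This is the integrated form of estimate (3.21) of Approach II.A of the paper: testing the error equation with v = φ(t), applying Cauchy–Schwarz and Young's inequality, and dropping the nonnegative diffusion term; the appearance of ‖G η‖ rather than ‖η‖ on the right-hand side is why this approach yields L²-estimates that are suboptimal with respect to r.) -/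
open scoped RealInnerProductSpace

/-!
Testing the error equation with `v = φ(t)` gives
`½ d/dt ‖φ‖² + ν ‖G φ‖² = ν ⟪G η, G φ⟫ ≤ ν ‖G η‖ ‖G φ‖`, and Young's inequality
`‖G η‖ ‖G φ‖ ≤ ½ ‖G η‖² + ½ ‖G φ‖²` absorbs the diffusion term, leaving
`d/dt ‖φ‖² ≤ ν ‖G η‖²`; integrating over `[0, t]` gives the estimate.
-/

section

variable {E : Type*} [NormedAddCommGroup E] [InnerProductSpace ℝ E]

theorem two_mul_inner_sub_two_mul_norm_sq_le (a b : E) :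
    2 * ⟪a, b⟫ - 2 * ‖b‖ ^ 2 ≤ ‖a‖ ^ 2 := by
  nlinarith [real_inner_le_norm a b, sq_nonneg (‖a‖ - ‖b‖)]

theorem two_mul_inner_le_of_inner_add_smul_inner_eq {F : Type*} [NormedAddCommGroup F]
    [InnerProductSpace ℝ F] {x x' : E} {a b : F} {ν : ℝ}
    (hν : 0 ≤ ν) (h : ⟪x', x⟫ + ν * ⟪b, b⟫ = ν * ⟪a, b⟫) :
    2 * ⟪x, x'⟫ ≤ ν * ‖a‖ ^ 2 := by
  have young := mul_le_mul_of_nonneg_left (two_mul_inner_sub_two_mul_norm_sq_le a b) hν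
  rw [real_inner_self_eq_norm_sq] at h
  rw [real_inner_comm]
  linarith

theorem norm_sq_le_add_integral_of_two_mul_inner_deriv_le {f f' : ℝ → E} {g : ℝ → ℝ}
    {a b : ℝ} (hab : a ≤ b) (hf : ∀ s ∈ Set.Icc a b, HasDerivAt f (f' s) s)
    (hf' : ContinuousOn f' (Set.Icc a b)) (hg : IntervalIntegrable g MeasureTheory.volume a b)
    (hle : ∀ s ∈ Set.Icc a b, 2 * ⟪f s, f' s⟫ ≤ g s) :
    ‖f b‖ ^ 2 ≤ ‖f a‖ ^ 2 + ∫ s in a..b, g s := by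
  have hfc : ContinuousOn f (Set.Icc a b) := fun s hs =>
    (hf s hs).continuousAt.continuousWithinAt
  have hint : IntervalIntegrable (fun s => 2 * ⟪f s, f' s⟫) MeasureTheory.volume a b :=
    (continuousOn_const.mul (hfc.inner hf')).intervalIntegrable_of_Icc hab
  have ftc : ∫ s in a..b, 2 * ⟪f s, f' s⟫ = ‖f b‖ ^ 2 - ‖f a‖ ^ 2 :=
    intervalIntegral.integral_eq_sub_of_hasDerivAt
      (fun s hs => (hf s (Set.uIcc_of_le hab ▸ hs)).norm_sq) hint
  linarith [intervalIntegral.integral_mono_on hab hint hg hle]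

end

theorem approach_IIA_estimate_general
    {H H' : Type*} [NormedAddCommGroup H] [InnerProductSpace ℝ H]
    [NormedAddCommGroup H'] [InnerProductSpace ℝ H']
    (G : H →L[ℝ] H') (V : Submodule ℝ H)
    (ν T : ℝ) (hν : 0 < ν)
    (φ φ' η : ℝ → H)
    (hφ : ∀ t ∈ Set.Icc (0:ℝ) T, HasDerivAt φ (φ' t) t)
    (hφ'c : ContinuousOn φ' (Set.Icc (0:ℝ) T))
    (hηc : ContinuousOn η (Set.Icc (0:ℝ) T))
    (hφV : ∀ t ∈ Set.Icc (0:ℝ) T, φ t ∈ V)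
    (herr : ∀ t ∈ Set.Icc (0:ℝ) T, ∀ v ∈ V,
      ⟪φ' t, v⟫ + ν * ⟪G (φ t), G v⟫ = ν * ⟪G (η t), G v⟫) :
    ∀ t ∈ Set.Icc (0:ℝ) T,
      ‖φ t‖ ^ 2 ≤ ‖φ 0‖ ^ 2 + ν * ∫ s in (0:ℝ)..t, ‖G (η s)‖ ^ 2 := by
  rintro t ⟨ht0, htT⟩
  have hsub : Set.Icc 0 t ⊆ Set.Icc 0 T := Set.Icc_subset_Icc_right htT
  have hint : IntervalIntegrable (fun s => ν * ‖G (η s)‖ ^ 2) MeasureTheory.volume 0 t :=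
    (continuousOn_const.mul ((G.continuous.comp_continuousOn (hηc.mono hsub)).norm.pow 2))
      |>.intervalIntegrable_of_Icc ht0
  rw [← intervalIntegral.integral_const_mul]
  refine norm_sq_le_add_integral_of_two_mul_inner_deriv_le ht0 (fun s hs => hφ s (hsub hs))
    (hφ'c.mono hsub) hint fun s hs => ?_
  exact two_mul_inner_le_of_inner_add_smul_inner_eq hν.le
    (herr s (hsub hs) (φ s) (hφV s (hsub hs)))

/-- Integrated estimate (3.21) of Approach II.A: under the error equation
`⟪φ', v⟫ + ν ⟪G φ, G v⟫ = ν ⟪G η, G v⟫` for all `v ∈ V`, one has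
`‖φ(t)‖² ≤ ‖φ(0)‖² + ν ∫₀ᵗ ‖G η(s)‖² ds`. -/
theorem approach_IIA_estimate
    {H H' : Type*} [NormedAddCommGroup H] [InnerProductSpace ℝ H]
    [NormedAddCommGroup H'] [InnerProductSpace ℝ H']
    (G : H →L[ℝ] H') (V : Submodule ℝ H)
    (ν T : ℝ) (hν : 0 < ν) (hT : 0 < T)
    (φ φ' η : ℝ → H)
    (hφ : ∀ t ∈ Set.Icc (0:ℝ) T, HasDerivAt φ (φ' t) t)
    (hφ'c : ContinuousOn φ' (Set.Icc (0:ℝ) T))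
    (hηc : ContinuousOn η (Set.Icc (0:ℝ) T))
    (hφV : ∀ t ∈ Set.Icc (0:ℝ) T, φ t ∈ V)
    (herr : ∀ t ∈ Set.Icc (0:ℝ) T, ∀ v ∈ V,
      ⟪φ' t, v⟫ + ν * ⟪G (φ t), G v⟫ = ν * ⟪G (η t), G v⟫) :
    ∀ t ∈ Set.Icc (0:ℝ) T,
      ‖φ t‖ ^ 2 ≤ ‖φ 0‖ ^ 2 + ν * ∫ s in (0:ℝ)..t, ‖G (η s)‖ ^ 2 :=
  approach_IIA_estimate_general G V ν T hν φ φ' η hφ hφ'c hηc hφV herr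
end

section
/- Let H and H' be real inner product spaces, G : H → H' a continuous linear map, V a subspace of H, ν > 0 and T > 0. Assume the inverse-estimate hypothesis: there is C_inv > 0 with ‖G v‖ ≤ C_inv ‖v‖ for all v ∈ V. Suppose φ : [0,T] → H is differentiable with continuous derivative and φ(t) ∈ V for all t, η : [0,T] → H is continuous, and for all t ∈ [0,T] and all v ∈ V the error equation ⟪φ'(t), v⟫ + ν ⟪G φ(t), G v⟫ = ν ⟪G η(t), G v⟫ holds. Then for every t ∈ [0,T], ‖G φ(t)‖² ≤ ‖G φ(0)‖² + ν · C_inv² · ∫₀ᵗ ‖G η(s)‖² ds. (This is the integrated form of estimate (3.27) of Approach II.C of the paper, obtained by testing the error equation with v = φ'(t), applying Young's inequality, and using the POD inverse estimate; the factor C_inv² makes the resulting H¹-seminorm estimate suboptimal with respect to r.) -/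
open scoped RealInnerProductSpace
open Filter Set Topology MeasureTheory

/-! Testing the error equation with `v = φ'(t)` and using Young's inequality together with the
inverse estimate bounds the rate of change `2 ⟪G φ, G φ'⟫` of `‖G φ‖²` by `ν C_inv² ‖G η‖²`;
integrating in time gives the estimate. The test function `φ'(t)` need not lie in `V`, only in its
closure, to which the error equation and the inverse estimate extend by continuity. -/

theorem HasDerivAt.mem_topologicalClosure {E : Type*} [NormedAddCommGroup E] [NormedSpace ℝ E]
    {K : Submodule ℝ E} {f : ℝ → E} {f' : E} {x : ℝ} (hf : HasDerivAt f f' x)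
    (hK : ∀ᶠ y in 𝓝 x, f y ∈ K) : f' ∈ K.topologicalClosure := by
  refine mem_closure_of_tendsto (hasDerivAt_iff_tendsto_slope.1 hf) ?_
  filter_upwards [nhdsWithin_le_nhds hK] with y hy
  rw [slope_def_module]
  exact K.smul_mem _ (K.sub_mem hy hK.self_of_nhds)

theorem two_inner_le_of_inner_self_add_eq {H H' : Type*} [NormedAddCommGroup H]
    [InnerProductSpace ℝ H] [NormedAddCommGroup H'] [InnerProductSpace ℝ H']
    {x : H} {a b y : H'} {ν C : ℝ} (hν : 0 < ν) (hy : ‖y‖ ≤ C * ‖x‖)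
    (h : ⟪x, x⟫ + ν * ⟪a, y⟫ = ν * ⟪b, y⟫) :
    2 * ⟪a, y⟫ ≤ ν * C ^ 2 * ‖b‖ ^ 2 := by
  have hby : ν * ⟪b, y⟫ ≤ ν * ‖b‖ * (C * ‖x‖) := by
    rw [mul_assoc]
    gcongr
    exact (real_inner_le_norm b y).trans (by gcongr)
  rw [real_inner_self_eq_norm_sq] at h
  -- Young: `ν ‖b‖ C ‖x‖ - ‖x‖² ≤ (ν C ‖b‖)² / 4`
  have hyoung : ν * (2 * ⟪a, y⟫) ≤ ν * (ν * C ^ 2 * ‖b‖ ^ 2) := by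
    nlinarith [sq_nonneg (ν * C * ‖b‖ - 2 * ‖x‖), sq_nonneg (ν * C * ‖b‖)]
  exact le_of_mul_le_mul_left hyoung hν

theorem approach_IIC_estimate_general
    {H H' : Type*} [NormedAddCommGroup H] [InnerProductSpace ℝ H]
    [NormedAddCommGroup H'] [InnerProductSpace ℝ H']
    (G : H →L[ℝ] H') (V : Submodule ℝ H)
    (ν T : ℝ) (hν : 0 < ν)
    (Cinv : ℝ)
    (hinv : ∀ v ∈ V, ‖G v‖ ≤ Cinv * ‖v‖)
    (φ φ' η : ℝ → H)
    (hφ : ∀ t ∈ Set.Icc (0:ℝ) T, HasDerivAt φ (φ' t) t)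
    (hηc : ContinuousOn η (Set.Icc (0:ℝ) T))
    (hφV : ∀ t ∈ Set.Icc (0:ℝ) T, φ t ∈ V)
    (herr : ∀ t ∈ Set.Icc (0:ℝ) T, ∀ v ∈ V,
      ⟪φ' t, v⟫ + ν * ⟪G (φ t), G v⟫ = ν * ⟪G (η t), G v⟫) :
    ∀ t ∈ Set.Icc (0:ℝ) T,
      ‖G (φ t)‖ ^ 2 ≤ ‖G (φ 0)‖ ^ 2 +
        ν * Cinv ^ 2 * ∫ s in (0:ℝ)..t, ‖G (η s)‖ ^ 2 := by
  intro t ht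
  have hsub : Icc 0 t ⊆ Icc 0 T := Icc_subset_Icc_right ht.2
  have hderiv : ∀ s ∈ Icc 0 T, HasDerivAt (fun s ↦ ‖G (φ s)‖ ^ 2) (2 * ⟪G (φ s), G (φ' s)⟫) s :=
    fun s hs ↦ (G.hasFDerivAt.comp_hasDerivAt s (hφ s hs)).norm_sq
  have hrate : ∀ s ∈ Ioo 0 T, 2 * ⟪G (φ s), G (φ' s)⟫ ≤ ν * Cinv ^ 2 * ‖G (η s)‖ ^ 2 := by
    intro s hs
    have hφ's : φ' s ∈ V.topologicalClosure :=
      (hφ s (Ioo_subset_Icc_self hs)).mem_topologicalClosure <|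
        eventually_of_mem (isOpen_Ioo.mem_nhds hs) fun y hy ↦ hφV y (Ioo_subset_Icc_self hy)
    have hinv' : ‖G (φ' s)‖ ≤ Cinv * ‖φ' s‖ :=
      le_on_closure hinv (by fun_prop) (by fun_prop) hφ's
    have herr' : ⟪φ' s, φ' s⟫ + ν * ⟪G (φ s), G (φ' s)⟫ = ν * ⟪G (η s), G (φ' s)⟫ :=
      Set.EqOn.closure (herr s (Ioo_subset_Icc_self hs)) (by fun_prop) (by fun_prop) hφ's
    exact two_inner_le_of_inner_self_add_eq hν hinv' herr'
  have hint : IntegrableOn (fun s ↦ ν * Cinv ^ 2 * ‖G (η s)‖ ^ 2) (Icc 0 t) :=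
    (ContinuousOn.mono (by fun_prop) hsub).integrableOn_Icc
  have henergy := intervalIntegral.sub_le_integral_of_hasDeriv_right_of_le ht.1
    (fun s hs ↦ (hderiv s (hsub hs)).continuousAt.continuousWithinAt)
    (fun s hs ↦ (hderiv s (hsub (Ioo_subset_Icc_self hs))).hasDerivWithinAt) hint
    (fun s hs ↦ hrate s (Ioo_subset_Ioo_right ht.2 hs))
  rw [intervalIntegral.integral_const_mul] at henergy
  linarith

/-- Integrated estimate (3.27) of Approach II.C: under the inverse estimate
`‖G v‖ ≤ C_inv ‖v‖` on `V` and the error equation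
`⟪φ', v⟫ + ν ⟪G φ, G v⟫ = ν ⟪G η, G v⟫` for all `v ∈ V`, one has
`‖G φ(t)‖² ≤ ‖G φ(0)‖² + ν C_inv² ∫₀ᵗ ‖G η(s)‖² ds`. -/
theorem approach_IIC_estimate
    {H H' : Type*} [NormedAddCommGroup H] [InnerProductSpace ℝ H]
    [NormedAddCommGroup H'] [InnerProductSpace ℝ H']
    (G : H →L[ℝ] H') (V : Submodule ℝ H)
    (ν T : ℝ) (hν : 0 < ν) (hT : 0 < T)
    (Cinv : ℝ) (hCinv : 0 < Cinv)
    (hinv : ∀ v ∈ V, ‖G v‖ ≤ Cinv * ‖v‖)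
    (φ φ' η : ℝ → H)
    (hφ : ∀ t ∈ Set.Icc (0:ℝ) T, HasDerivAt φ (φ' t) t)
    (hφ'c : ContinuousOn φ' (Set.Icc (0:ℝ) T))
    (hηc : ContinuousOn η (Set.Icc (0:ℝ) T))
    (hφV : ∀ t ∈ Set.Icc (0:ℝ) T, φ t ∈ V)
    (herr : ∀ t ∈ Set.Icc (0:ℝ) T, ∀ v ∈ V,
      ⟪φ' t, v⟫ + ν * ⟪G (φ t), G v⟫ = ν * ⟪G (η t), G v⟫) :
    ∀ t ∈ Set.Icc (0:ℝ) T,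
      ‖G (φ t)‖ ^ 2 ≤ ‖G (φ 0)‖ ^ 2 +
        ν * Cinv ^ 2 * ∫ s in (0:ℝ)..t, ‖G (η s)‖ ^ 2 :=
  approach_IIC_estimate_general G V ν T hν Cinv hinv φ φ' η hφ hηc hφV herr
end

section
/- Let H and H' be real inner product spaces, G : H → H' a continuous linear map, V a subspace of H, ν > 0 and T > 0. Suppose φ : [0,T] → H is differentiable with continuous derivative and φ(t) ∈ V for all t, η : [0,T] → H is continuous, and for all t ∈ [0,T] and all v ∈ V the error equation ⟪φ'(t), v⟫ + ν ⟪G φ(t), G v⟫ = ν ⟪G η(t), G v⟫ holds. Then ‖φ(T)‖² + ν ∫₀ᵀ ‖G φ(s)‖² ds ≤ ‖φ(0)‖² + ν ∫₀ᵀ ‖G η(s)‖² ds. (This is the estimate of Approach II.D of the paper, eq. (3.23b): the error in the solution norm L²(0,T;H¹) is optimal with respect to r even when the difference quotients are not used, since both sides involve the H¹-seminorm of the corresponding quantities.) -/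
/-!
Testing the error equation with `v = φ t` and bounding `⟪G η, G φ⟫` by
`(‖G η‖² + ‖G φ‖²) / 2` gives `d/dt ‖φ‖² ≤ ν ‖G η‖² - ν ‖G φ‖²`; integrating this differential
inequality over `[0, T]` is the estimate.
-/

open scoped RealInnerProductSpace

open Set MeasureTheory

section

variable {H H' : Type*} [NormedAddCommGroup H] [InnerProductSpace ℝ H]
  [NormedAddCommGroup H'] [InnerProductSpace ℝ H']

theorem two_mul_real_inner_le_norm_sq_add_norm_sq (x y : H') :
    2 * ⟪x, y⟫ ≤ ‖x‖ ^ 2 + ‖y‖ ^ 2 :=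
  calc 2 * ⟪x, y⟫ ≤ 2 * (‖x‖ * ‖y‖) := by gcongr; exact real_inner_le_norm x y
    _ ≤ ‖x‖ ^ 2 + ‖y‖ ^ 2 := by rw [← mul_assoc]; exact two_mul_le_add_sq _ _

theorem two_mul_real_inner_le_of_error_eq {ν : ℝ} (hν : 0 ≤ ν) {u p : H} {x y : H'}
    (h : ⟪p, u⟫ + ν * ⟪x, x⟫ = ν * ⟪y, x⟫) :
    2 * ⟪u, p⟫ ≤ ν * ‖y‖ ^ 2 - ν * ‖x‖ ^ 2 := by
  have hyx : 2 * ⟪y, x⟫ ≤ ‖y‖ ^ 2 + ‖x‖ ^ 2 := two_mul_real_inner_le_norm_sq_add_norm_sq y x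
  rw [real_inner_self_eq_norm_sq, real_inner_comm] at h
  nlinarith

end

theorem approach_IID_estimate_general
    {H H' : Type*} [NormedAddCommGroup H] [InnerProductSpace ℝ H]
    [NormedAddCommGroup H'] [InnerProductSpace ℝ H']
    (G : H →L[ℝ] H') (V : Submodule ℝ H)
    (ν T : ℝ) (hν : 0 < ν) (hT : 0 < T)
    (φ φ' η : ℝ → H)
    (hφ : ∀ t ∈ Set.Icc (0:ℝ) T, HasDerivAt φ (φ' t) t)
    (hηc : ContinuousOn η (Set.Icc (0:ℝ) T))
    (hφV : ∀ t ∈ Set.Icc (0:ℝ) T, φ t ∈ V)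
    (herr : ∀ t ∈ Set.Icc (0:ℝ) T, ∀ v ∈ V,
      ⟪φ' t, v⟫ + ν * ⟪G (φ t), G v⟫ = ν * ⟪G (η t), G v⟫) :
    ‖φ T‖ ^ 2 + ν * ∫ s in (0:ℝ)..T, ‖G (φ s)‖ ^ 2 ≤
      ‖φ 0‖ ^ 2 + ν * ∫ s in (0:ℝ)..T, ‖G (η s)‖ ^ 2 := by
  have hφc : ContinuousOn φ (Icc 0 T) := fun t ht => (hφ t ht).continuousAt.continuousWithinAt
  have hGφ : ContinuousOn (fun s => ‖G (φ s)‖ ^ 2) (Icc 0 T) :=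
    (G.continuous.comp_continuousOn hφc).norm.pow 2
  have hGη : ContinuousOn (fun s => ‖G (η s)‖ ^ 2) (Icc 0 T) :=
    (G.continuous.comp_continuousOn hηc).norm.pow 2
  have henergy : ‖φ T‖ ^ 2 - ‖φ 0‖ ^ 2 ≤
      ∫ s in (0:ℝ)..T, (ν * ‖G (η s)‖ ^ 2 - ν * ‖G (φ s)‖ ^ 2) :=
    intervalIntegral.sub_le_integral_of_hasDeriv_right_of_le hT.le
      (fun t ht => ((hφ t ht).norm_sq).continuousAt.continuousWithinAt)
      (fun t ht => ((hφ t (Ioo_subset_Icc_self ht)).norm_sq).hasDerivWithinAt)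
      ((hGη.integrableOn_Icc.const_mul ν).sub (hGφ.integrableOn_Icc.const_mul ν))
      (fun t ht => two_mul_real_inner_le_of_error_eq hν.le <|
        herr t (Ioo_subset_Icc_self ht) (φ t) (hφV t (Ioo_subset_Icc_self ht)))
  rw [intervalIntegral.integral_sub ((hGη.intervalIntegrable_of_Icc hT.le).const_mul ν)
      ((hGφ.intervalIntegrable_of_Icc hT.le).const_mul ν),
    intervalIntegral.integral_const_mul, intervalIntegral.integral_const_mul] at henergy
  linarith

/-- Approach II.D estimate (3.23b): under the error equation
`⟪φ', v⟫ + ν ⟪G φ, G v⟫ = ν ⟪G η, G v⟫` for all `v ∈ V`, one has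
`‖φ(T)‖² + ν ∫₀ᵀ ‖G φ(s)‖² ds ≤ ‖φ(0)‖² + ν ∫₀ᵀ ‖G η(s)‖² ds`. -/
theorem approach_IID_estimate
    {H H' : Type*} [NormedAddCommGroup H] [InnerProductSpace ℝ H]
    [NormedAddCommGroup H'] [InnerProductSpace ℝ H']
    (G : H →L[ℝ] H') (V : Submodule ℝ H)
    (ν T : ℝ) (hν : 0 < ν) (hT : 0 < T)
    (φ φ' η : ℝ → H)
    (hφ : ∀ t ∈ Set.Icc (0:ℝ) T, HasDerivAt φ (φ' t) t)
    (hφ'c : ContinuousOn φ' (Set.Icc (0:ℝ) T))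
    (hηc : ContinuousOn η (Set.Icc (0:ℝ) T))
    (hφV : ∀ t ∈ Set.Icc (0:ℝ) T, φ t ∈ V)
    (herr : ∀ t ∈ Set.Icc (0:ℝ) T, ∀ v ∈ V,
      ⟪φ' t, v⟫ + ν * ⟪G (φ t), G v⟫ = ν * ⟪G (η t), G v⟫) :
    ‖φ T‖ ^ 2 + ν * ∫ s in (0:ℝ)..T, ‖G (φ s)‖ ^ 2 ≤
      ‖φ 0‖ ^ 2 + ν * ∫ s in (0:ℝ)..T, ‖G (η s)‖ ^ 2 :=
  approach_IID_estimate_general G V ν T hν hT φ φ' η hφ hηc hφV herr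
end
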